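/- arXiv:2003.03906 — 13 statements merged into one kernel-verified Lean document; each statement's English description precedes it below -/
import Mathlib

section
/- Let p be an odd prime and m, n positive integers. If p^m = 2^n + 1 or p^m = 2^n - 1, then either m = 1, or (p, m, n) = (3, 2, 3) with 3^2 = 2^3 + 1. -/
/-! For odd `m`, the cofactor `∑ pⁱ εᵐ⁻¹⁻ⁱ` of `pᵐ - εᵐ = (p - ε) · ∑ pⁱ εᵐ⁻¹⁻ⁱ` (with `ε = ±1`) is
odd, so if `pᵐ - ε` is a power of two it divides `p - ε`, forcing `m = 1`. For even `m = 2k`,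
put `a = pᵏ`: `a² + 1` is never divisible by `4`, and `a² - 1 = (a - 1)(a + 1)` is a power of two
only when `a - 1` and `a + 1` are the powers of two `2` and `4`. -/

theorem Prime.pow_dvd_sub_of_pow_sub_pow_eq_pow {R : Type*} [CommRing R] [IsCancelMulZero R]
    {q x y : R} {m n : ℕ} (hq : Prime q) (hxy : q ∣ x - y) (hx : ¬q ∣ x) (hm : ¬q ∣ (m : R))
    (h : x ^ m - y ^ m = q ^ n) : q ^ n ∣ x - y := by
  refine hq.pow_dvd_of_dvd_mul_left n (not_dvd_geom_sum₂ hq hxy hx hm) ?_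
  rw [geom_sum₂_mul, h]

lemma eq_one_of_pow_sub_pow_eq_two_pow {p m n : ℕ} {ε : ℤ} (hp : Odd p) (hp1 : 1 < p)
    (hε : ε = 1 ∨ ε = -1) (hm : Odd m) (h : (p : ℤ) ^ m - ε ^ m = 2 ^ n) : m = 1 := by
  have hp2 := Nat.odd_iff.1 hp
  have hm2 := Nat.odd_iff.1 hm
  have hεm : ε ^ m = ε := by rcases hε with rfl | rfl <;> simp [hm.neg_one_pow]
  have hdvd : (2 : ℤ) ^ n ∣ p - ε :=
    Int.prime_two.pow_dvd_sub_of_pow_sub_pow_eq_pow (by omega) (by omega) (by omega) h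
  have hle : (p : ℤ) ^ m ≤ p ^ 1 := by
    have := Int.le_of_dvd (by omega) hdvd
    rw [← h, hεm] at this
    linarith
  have := (Nat.pow_le_pow_iff_right hp1).1 (by exact_mod_cast hle)
  omega

lemma eq_one_of_two_pow_add_two_eq_two_pow {s t : ℕ} (h : 2 ^ s + 2 = 2 ^ t) : s = 1 := by
  rcases s with _ | _ | s <;> rcases t with _ | _ | t <;> simp [pow_succ] at h ⊢ <;> omega

lemma sq_eq_two_pow_add_one_iff {a n : ℕ} : a ^ 2 = 2 ^ n + 1 ↔ a = 3 ∧ n = 3 := by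
  refine ⟨fun h ↦ ?_, fun ⟨ha, hn⟩ ↦ by subst ha hn; norm_num⟩
  obtain ⟨b, rfl⟩ : ∃ b, a = b + 1 :=
    Nat.exists_eq_add_one.2 (by nlinarith [Nat.one_le_two_pow (n := n)])
  have hfac : b * (b + 2) = 2 ^ n := by nlinarith
  obtain ⟨s, -, hs⟩ := (Nat.dvd_prime_pow Nat.prime_two).1 (Dvd.intro _ hfac)
  obtain ⟨t, -, ht⟩ := (Nat.dvd_prime_pow Nat.prime_two).1 (Dvd.intro_left _ hfac)
  have hst : 2 ^ s + 2 = 2 ^ t := hs ▸ ht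
  have hb : b = 2 := by rw [hs, eq_one_of_two_pow_add_two_eq_two_pow hst, pow_one]
  subst hb
  exact ⟨rfl, Nat.pow_right_injective le_rfl (by omega : 2 ^ n = 2 ^ 3)⟩

lemma sq_add_one_ne_two_pow {a : ℕ} (ha : 1 < a) (n : ℕ) : a ^ 2 + 1 ≠ 2 ^ n := by
  intro h
  have h4 : ¬4 ∣ a ^ 2 + 1 := by
    rw [← ZMod.natCast_eq_zero_iff]
    push_cast
    exact (by decide : ∀ x : ZMod 4, x ^ 2 + 1 ≠ 0) _
  have hn : n < 2 := by
    by_contra! hn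
    exact h4 (h ▸ pow_dvd_pow 2 hn)
  interval_cases n <;> nlinarith

theorem thompson_lemma_general (p m n : ℕ) (hp : p.Prime) (hodd : Odd p)
    (hm : 1 ≤ m)
    (h : p ^ m = 2 ^ n + 1 ∨ p ^ m + 1 = 2 ^ n) :
    m = 1 ∨ (p = 3 ∧ m = 2 ∧ n = 3) := by
  rcases Nat.even_or_odd m with ⟨k, rfl⟩ | hmodd
  · right
    have hpk : 1 < p ^ k := Nat.one_lt_pow (by omega) hp.one_lt
    rw [← two_mul, pow_mul'] at h
    rcases h with h | h
    · obtain ⟨hpk3, rfl⟩ := sq_eq_two_pow_add_one_iff.1 h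
      obtain ⟨rfl, rfl⟩ := Nat.prime_three.pow_eq_iff.1 hpk3
      exact ⟨rfl, rfl, rfl⟩
    · exact absurd h (sq_add_one_ne_two_pow hpk n)
  · left
    rcases h with h | h
    · refine eq_one_of_pow_sub_pow_eq_two_pow hodd hp.one_lt (Or.inl rfl) hmodd (n := n) ?_
      rw [one_pow, sub_eq_iff_eq_add]
      exact_mod_cast h
    · refine eq_one_of_pow_sub_pow_eq_two_pow hodd hp.one_lt (Or.inr rfl) hmodd (n := n) ?_
      rw [hmodd.neg_one_pow, sub_neg_eq_add]
      exact_mod_cast h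

/-- Thompson's lemma: for an odd prime `p` and positive integers `m, n`,
if `p^m = 2^n + 1` or `p^m = 2^n - 1`, then `m = 1` or `(p,m,n) = (3,2,3)`. -/
theorem thompson_lemma (p m n : ℕ) (hp : p.Prime) (hodd : Odd p)
    (hm : 1 ≤ m) (hn : 1 ≤ n)
    (h : p ^ m = 2 ^ n + 1 ∨ p ^ m + 1 = 2 ^ n) :
    m = 1 ∨ (p = 3 ∧ m = 2 ∧ n = 3) :=
  thompson_lemma_general p m n hp hodd hm h
end

section
/- If (a_0, a_1, a_2, a_3) is an arithmetic progression of positive integers with 1 ≤ a_0 < a_1, gcd(a_0, a_1 - a_0) = 1, and the set of prime divisors of a_0 · a_1 · a_2 · a_3 has at most two elements, then (a_0, a_1, a_2, a_3) = (1, 2, 3, 4). -/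
/-!
Consecutive terms of a primitive progression are coprime, and `gcd(a₁, a₃) ∣ 2`. Choosing primes
`p ∣ a₁` and `q ∣ a₂` uses up both allowed primes, so `a₁` and `a₃`, being prime to `q`, are powers
of `p`. Then `a₁ ∣ a₃`, hence `a₁ ∣ gcd(a₁, a₃) ∣ 2`, which forces `a₀ = d = 1`.
-/

lemma Nat.Coprime.gcd_self_add_mul_dvd {u d : ℕ} (h : u.Coprime d) (m : ℕ) :
    u.gcd (u + m * d) ∣ m := by
  rw [Nat.gcd_self_add_right, Nat.Coprime.gcd_mul_right_cancel_right m h.symm]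
  exact Nat.gcd_dvd_right u m

lemma Nat.exists_eq_pow_of_primeFactors_card_le_two {N m p q : ℕ}
    (hN : N.primeFactors.card ≤ 2) (hN0 : N ≠ 0) (hp : p.Prime) (hq : q.Prime)
    (hpN : p ∣ N) (hqN : q ∣ N) (hpq : p ≠ q) (hmN : m ∣ N) (hqm : ¬ q ∣ m) :
    ∃ k, m = p ^ k := by
  refine ⟨_, Nat.eq_prime_pow_of_unique_prime_dvd (ne_zero_of_dvd_ne_zero hN0 hmN)
    fun {r} hr hrm => ?_⟩
  by_contra hrp
  have hrq : r ≠ q := by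
    rintro rfl
    exact hqm hrm
  have : 2 < N.primeFactors.card := Finset.two_lt_card.mpr
    ⟨p, Nat.mem_primeFactors.mpr ⟨hp, hpN, hN0⟩, q, Nat.mem_primeFactors.mpr ⟨hq, hqN, hN0⟩,
      r, Nat.mem_primeFactors.mpr ⟨hr, hrm.trans hmN, hN0⟩, hpq, Ne.symm hrp, Ne.symm hrq⟩
  omega

lemma Nat.Prime.pow_dvd_pow_of_le {p i j : ℕ} (hp : p.Prime) (h : p ^ i ≤ p ^ j) :
    p ^ i ∣ p ^ j :=
  pow_dvd_pow p ((Nat.pow_le_pow_iff_right hp.one_lt).mp h)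

/-- A primitive 4-term arithmetic progression of positive integers involving
at most two primes must be `(1,2,3,4)`. -/
theorem ap4_two_primes (a₀ d : ℕ) (ha : 1 ≤ a₀) (hd : 1 ≤ d)
    (hprim : Nat.Coprime a₀ d)
    (hprimes : (a₀ * (a₀ + d) * (a₀ + 2 * d) * (a₀ + 3 * d)).primeFactors.card ≤ 2) :
    a₀ = 1 ∧ d = 1 := by
  have hN0 : a₀ * (a₀ + d) * (a₀ + 2 * d) * (a₀ + 3 * d) ≠ 0 := by positivity
  have hcop₁ : (a₀ + d).Coprime d := Nat.coprime_add_self_left.mpr hprim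
  have hcop₂ : (a₀ + 2 * d).Coprime d := (Nat.coprime_add_mul_right_left _ _ 2).mpr hprim
  have h₁₂ : (a₀ + d).Coprime (a₀ + 2 * d) := by
    simpa only [two_mul, ← add_assoc] using Nat.coprime_self_add_right.mpr hcop₁
  have h₂₃ : (a₀ + 2 * d).Coprime (a₀ + 3 * d) := by
    simpa only [show a₀ + 2 * d + d = a₀ + 3 * d by ring] using
      Nat.coprime_self_add_right.mpr hcop₂
  have h₁₃ : (a₀ + d).gcd (a₀ + 3 * d) ∣ 2 := by
    simpa only [show a₀ + d + 2 * d = a₀ + 3 * d by ring] using hcop₁.gcd_self_add_mul_dvd 2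
  obtain ⟨p, hp, hp₁⟩ := Nat.exists_prime_and_dvd (n := a₀ + d) (by omega)
  obtain ⟨q, hq, hq₂⟩ := Nat.exists_prime_and_dvd (n := a₀ + 2 * d) (by omega)
  have hq₁ : ¬ q ∣ a₀ + d := fun h => hq.ne_one (Nat.eq_one_of_dvd_coprimes h₁₂ h hq₂)
  have hq₃ : ¬ q ∣ a₀ + 3 * d := fun h => hq.ne_one (Nat.eq_one_of_dvd_coprimes h₂₃ hq₂ h)
  have hpq : p ≠ q := by
    rintro rfl
    exact hq₁ hp₁
  have hdvd₁ : a₀ + d ∣ a₀ * (a₀ + d) * (a₀ + 2 * d) * (a₀ + 3 * d) :=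
    Dvd.intro (a₀ * (a₀ + 2 * d) * (a₀ + 3 * d)) (by ring)
  have hdvd₂ : a₀ + 2 * d ∣ a₀ * (a₀ + d) * (a₀ + 2 * d) * (a₀ + 3 * d) :=
    Dvd.intro (a₀ * (a₀ + d) * (a₀ + 3 * d)) (by ring)
  have hdvd₃ : a₀ + 3 * d ∣ a₀ * (a₀ + d) * (a₀ + 2 * d) * (a₀ + 3 * d) :=
    Dvd.intro_left _ rfl
  obtain ⟨i, hi⟩ := Nat.exists_eq_pow_of_primeFactors_card_le_two hprimes hN0 hp hq
    (hp₁.trans hdvd₁) (hq₂.trans hdvd₂) hpq hdvd₁ hq₁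
  obtain ⟨j, hj⟩ := Nat.exists_eq_pow_of_primeFactors_card_le_two hprimes hN0 hp hq
    (hp₁.trans hdvd₁) (hq₂.trans hdvd₂) hpq hdvd₃ hq₃
  have h₁dvd₃ : a₀ + d ∣ a₀ + 3 * d := by
    rw [hi, hj]
    exact hp.pow_dvd_pow_of_le (hi ▸ hj ▸ by omega)
  have h₁dvd₂ : a₀ + d ∣ 2 := Nat.gcd_eq_left h₁dvd₃ ▸ h₁₃
  have := Nat.le_of_dvd two_pos h₁dvd₂
  omega
end

section
/- There is no arithmetic progression (a_0, a_1, a_2, a_3, a_4) of positive integers of length 5 with 1 ≤ a_0 < a_1, gcd(a_0, a_1 - a_0) = 1, such that the terms collectively have at most two distinct prime divisors. -/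
/-!
Two terms of a primitive progression at distance `k` have a gcd dividing `k`. So consecutive terms
share no prime, and a prime shared by terms two apart is `2`. Choose primes `p₁, …, p₄` dividing
the terms `a₀ + i d`, `1 ≤ i ≤ 4`. With only two primes available, the alternation
`p₁ ≠ p₂ ≠ p₃ ≠ p₄` forces `p₁ = p₃` and `p₂ = p₄`, hence `p₁ = 2 = p₂`, a contradiction.
-/

theorem Finset.eq_of_ne_of_ne_of_card_le_two {α : Type*} {s : Finset α} {x y z : α}
    (hs : s.card ≤ 2) (hx : x ∈ s) (hy : y ∈ s) (hz : z ∈ s) (hxy : x ≠ y) (hyz : y ≠ z) :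
    x = z := by
  by_contra hxz
  exact (Finset.two_lt_card_iff.mpr ⟨x, y, z, hx, hy, hz, hxy, hxz, hyz⟩).not_ge hs

namespace Nat.Prime

variable {p a d i : ℕ}

theorem dvd_of_dvd_ap_terms {k : ℕ} (hp : p.Prime) (hcop : a.Coprime d)
    (hi : p ∣ a + i * d) (hk : p ∣ a + (i + k) * d) : p ∣ k := by
  have hkd : p ∣ k * d := (Nat.dvd_add_right hi).mp (by rwa [add_mul, ← add_assoc] at hk)
  have hpd : ¬ p ∣ d := fun hpd =>
    hp.ne_one (Nat.eq_one_of_dvd_coprimes hcop ((Nat.dvd_add_left (hpd.mul_left i)).mp hi) hpd)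
  exact (hp.dvd_mul.mp hkd).resolve_right hpd

theorem not_dvd_ap_succ (hp : p.Prime) (hcop : a.Coprime d) (hi : p ∣ a + i * d) :
    ¬ p ∣ a + (i + 1) * d :=
  fun h => hp.not_dvd_one (hp.dvd_of_dvd_ap_terms hcop hi h)

theorem eq_two_of_dvd_ap_terms (hp : p.Prime) (hcop : a.Coprime d) (hi : p ∣ a + i * d)
    (h : p ∣ a + (i + 2) * d) : p = 2 :=
  (Nat.prime_dvd_prime_iff_eq hp Nat.prime_two).mp (hp.dvd_of_dvd_ap_terms hcop hi h)

end Nat.Prime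

/-- There is no primitive 5-term arithmetic progression of positive integers
involving at most two primes. -/
theorem no_ap5_two_primes (a₀ d : ℕ) (ha : 1 ≤ a₀) (hd : 1 ≤ d)
    (hprim : Nat.Coprime a₀ d)
    (hprimes : (a₀ * (a₀ + d) * (a₀ + 2 * d) * (a₀ + 3 * d) * (a₀ + 4 * d)).primeFactors.card ≤ 2) :
    False := by
  set N := a₀ * (a₀ + d) * (a₀ + 2 * d) * (a₀ + 3 * d) * (a₀ + 4 * d)
  have hN : N ≠ 0 := by positivity
  have prime_factor (m : ℕ) (hm : m ∣ N) (h2 : 2 ≤ m) : ∃ p ∈ N.primeFactors, p ∣ m := by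
    obtain ⟨p, hp, hpm⟩ := Nat.exists_prime_and_dvd (show m ≠ 1 by omega)
    exact ⟨p, Nat.mem_primeFactors.mpr ⟨hp, hpm.trans hm, hN⟩, hpm⟩
  obtain ⟨p₁, hN₁, h₁⟩ := prime_factor (a₀ + 1 * d)
    (by rw [one_mul]; exact (dvd_mul_left _ _).mul_right _ |>.mul_right _ |>.mul_right _) (by omega)
  obtain ⟨p₂, hN₂, h₂⟩ := prime_factor (a₀ + 2 * d)
    ((dvd_mul_left _ _).mul_right _ |>.mul_right _) (by omega)
  obtain ⟨p₃, hN₃, h₃⟩ := prime_factor (a₀ + 3 * d) ((dvd_mul_left _ _).mul_right _) (by omega)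
  obtain ⟨p₄, hN₄, h₄⟩ := prime_factor (a₀ + 4 * d) (dvd_mul_left _ _) (by omega)
  have hp₁ := Nat.prime_of_mem_primeFactors hN₁
  have hp₂ := Nat.prime_of_mem_primeFactors hN₂
  have h₁₂ : p₁ ≠ p₂ := by rintro rfl; exact hp₁.not_dvd_ap_succ hprim h₁ h₂
  have h₂₃ : p₂ ≠ p₃ := by rintro rfl; exact hp₂.not_dvd_ap_succ hprim h₂ h₃
  have h₃₄ : p₃ ≠ p₄ := by
    rintro rfl; exact (Nat.prime_of_mem_primeFactors hN₃).not_dvd_ap_succ hprim h₃ h₄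
  obtain rfl := Finset.eq_of_ne_of_ne_of_card_le_two hprimes hN₁ hN₂ hN₃ h₁₂ h₂₃
  obtain rfl := Finset.eq_of_ne_of_ne_of_card_le_two hprimes hN₂ hN₁ hN₄ h₁₂.symm h₃₄
  exact h₁₂ ((hp₁.eq_two_of_dvd_ap_terms hprim h₁ h₃).trans
    (hp₂.eq_two_of_dvd_ap_terms hprim h₂ h₄).symm)
end

section
/- Suppose (1, a_1, a_2) is a primitive arithmetic progression of positive integers with 1 < a_1 < a_2 whose terms involve exactly the two primes 2 and q for some odd prime q, with a_1 a power of 2. Then a_1 = 2^α and a_2 = 2^{α+1} - 1 for some α ≥ 1, and 2^{α+1} - 1 is a Mersenne prime. -/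
/-!
`a₂ = 2a₁ - 1` is odd, so all its prime factors equal `q` and `a₂ = q ^ m`; then
`q ^ m + 1 = 2 ^ (α + 1)`. For even `m` the left side is `2 mod 4`, which is impossible. For odd
`m`, `q ^ m ≡ q` modulo `2 (q + 1)`, so `q ^ m + 1` is `q + 1` times an odd number; as it is a
power of two, that odd factor is `1` and `m = 1`.
-/

namespace Nat

lemma eq_pow_of_odd_of_primeFactors_subset {n q : ℕ} (hn : Odd n)
    (h : n.primeFactors ⊆ {2, q}) : ∃ m, n = q ^ m := by
  refine ⟨_, eq_prime_pow_of_unique_prime_dvd hn.pos.ne' fun {d} hd hdn => ?_⟩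
  have hd2 : d ≠ 2 := by
    rintro rfl
    exact not_even_iff_odd.mpr hn (even_iff_two_dvd.mpr hdn)
  simpa [hd2] using h (mem_primeFactors.mpr ⟨hd, hdn, hn.pos.ne'⟩)

lemma pow_modEq_self_of_odd {x m : ℕ} (hx : Odd x) (hm : Odd m) :
    x ^ m ≡ x [MOD 2 * (x + 1)] := by
  obtain ⟨t, rfl⟩ := hx
  obtain ⟨s, rfl⟩ := hm
  have hsq : (2 * t + 1) ^ 2 ≡ 1 [MOD 2 * (2 * t + 1 + 1)] := by
    have : (2 * t + 1) ^ 2 = 1 + 2 * (2 * t + 1 + 1) * t := by ring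
    rw [this]
    exact add_mul_mod_self_left 1 _ t
  calc (2 * t + 1) ^ (2 * s + 1) = ((2 * t + 1) ^ 2) ^ s * (2 * t + 1) := by
        rw [pow_succ, pow_mul]
    _ ≡ 1 ^ s * (2 * t + 1) [MOD 2 * (2 * t + 1 + 1)] := (hsq.pow s).mul_right _
    _ = 2 * t + 1 := by ring

lemma odd_of_pow_add_one_eq_two_pow {x m n : ℕ} (hm : m ≠ 0) (hn : n ≠ 0)
    (h : x ^ m + 1 = 2 ^ n) : Odd x := by
  have hxm : ¬Even (x ^ m) := even_add_one.mp (h ▸ even_pow.mpr ⟨even_two, hn⟩)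
  rw [even_pow, not_and_or, not_not] at hxm
  exact not_even_iff_odd.mp (hxm.resolve_right hm)

lemma eq_one_of_pow_add_one_eq_two_pow {x m n : ℕ} (hx : 1 < x) (hm : m ≠ 0)
    (h : x ^ m + 1 = 2 ^ n) : m = 1 := by
  have hn : 2 ≤ n := by
    have := one_lt_pow hm hx
    by_contra! hn
    interval_cases n <;> omega
  have hx_odd : Odd x := odd_of_pow_add_one_eq_two_pow hm (by omega) h
  rcases even_or_odd m with ⟨s, rfl⟩ | hm_odd
  · have h8 : 8 ∣ (x ^ s) ^ 2 - 1 := eight_dvd_sq_sub_one_of_odd hx_odd.pow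
    have h4 : 4 ∣ 2 ^ n := pow_dvd_pow 2 hn
    rw [← pow_mul, mul_two] at h8
    omega
  · obtain ⟨c, hc⟩ : ∃ c, 2 ^ n = (x + 1) * (2 * c + 1) := by
      have hmod := (pow_modEq_self_of_odd hx_odd hm_odd).add_right 1
      rw [h, ModEq, mod_eq_of_lt (by omega : x + 1 < 2 * (x + 1))] at hmod
      refine ⟨2 ^ n / (2 * (x + 1)), ?_⟩
      conv_lhs => rw [← div_add_mod (2 ^ n) (2 * (x + 1)), hmod]
      ring
    have hc0 : 2 * c + 1 = 1 :=
      ((odd_two_mul_add_one c).coprime_two_right.pow_right n).eq_one_of_dvd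
        (Dvd.intro_left _ hc.symm)
    rw [hc0, mul_one, ← h] at hc
    exact Nat.pow_right_injective hx (by simpa using hc)

end Nat

theorem ap_one_pow_two_mersenne_general (a₁ a₂ q : ℕ) (h1 : 1 < a₁)
    (hap : 1 + a₂ = 2 * a₁) (hq : q.Prime)
    (hprimes : (a₁ * a₂).primeFactors = {2, q})
    (hpow : ∃ k : ℕ, a₁ = 2 ^ k) :
    ∃ α : ℕ, 1 ≤ α ∧ a₁ = 2 ^ α ∧ a₂ = 2 ^ (α + 1) - 1 ∧ (2 ^ (α + 1) - 1).Prime := by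
  obtain ⟨k, rfl⟩ := hpow
  have hk : 1 ≤ k := Nat.one_le_iff_ne_zero.mpr (Nat.one_lt_two_pow_iff.mp h1)
  have ha₂ : a₂ = 2 ^ (k + 1) - 1 := by
    rw [pow_succ]
    omega
  have ha₂_odd : Odd a₂ := ⟨2 ^ k - 1, by omega⟩
  have hfac : a₂.primeFactors ⊆ {2, q} := hprimes ▸
    Nat.primeFactors_mono (dvd_mul_left a₂ _) (mul_ne_zero (by positivity) ha₂_odd.pos.ne')
  obtain ⟨m, hm⟩ := Nat.eq_pow_of_odd_of_primeFactors_subset ha₂_odd hfac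
  have hm0 : m ≠ 0 := by
    rintro rfl
    rw [pow_zero] at hm
    omega
  have hqm : q ^ m + 1 = 2 ^ (k + 1) := by
    rw [← hm, pow_succ]
    omega
  have hm1 : m = 1 := Nat.eq_one_of_pow_add_one_eq_two_pow hq.one_lt hm0 hqm
  refine ⟨k, hk, rfl, ha₂, ?_⟩
  rwa [← ha₂, hm, hm1, pow_one]

/-- If `(1, a₁, a₂)` is an arithmetic progression with `1 < a₁ < a₂`, involving
exactly the primes `2` and `q` (`q` odd), and `a₁` is a power of `2`, then
`a₁ = 2^α` and `a₂ = 2^(α+1) - 1` is a Mersenne prime. -/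
theorem ap_one_pow_two_mersenne (a₁ a₂ q : ℕ) (h1 : 1 < a₁) (h2 : a₁ < a₂)
    (hap : 1 + a₂ = 2 * a₁) (hq : q.Prime) (hqodd : Odd q)
    (hprimes : (a₁ * a₂).primeFactors = {2, q})
    (hpow : ∃ k : ℕ, a₁ = 2 ^ k) :
    ∃ α : ℕ, 1 ≤ α ∧ a₁ = 2 ^ α ∧ a₂ = 2 ^ (α + 1) - 1 ∧ (2 ^ (α + 1) - 1).Prime :=
  ap_one_pow_two_mersenne_general a₁ a₂ q h1 hap hq hprimes hpow
end

section
/- Suppose (2, a_1, a_2) is an arithmetic progression of positive integers with 2 < a_1 < a_2, gcd(2, a_1 - 2) = 1, and the set of prime divisors of 2·a_1·a_2 equals {2, q} for some odd prime q. Then either (a_1, a_2) = (9, 16) with q = 3, or a_1 = q is a Fermat prime with q = 2^α + 1 and a_2 = 2^{α+1} for some α ≥ 1. -/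
/-!
Since `a₂ = 2 (a₁ - 1)` and primitivity makes `a₁` odd, the coprime numbers `a₁` and `a₁ - 1`
are a power of `q` and a power of `2`: `q ^ m = 2 ^ β + 1`. For odd `m` the geometric sum
`(q ^ m - 1) / (q - 1)` is odd and divides `2 ^ β`, so `m = 1` and `q` is a Fermat prime. For
even `m` the factors `q ^ (m / 2) ∓ 1` are powers of `2` two apart, i.e. `2` and `4`, so
`a₁ = 3 ^ 2 = 9`.
-/

open Finset

namespace Nat

theorem two_pow_eq_two_pow_add_two {s t : ℕ} (h : 2 ^ t = 2 ^ s + 2) : s = 1 ∧ t = 2 := by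
  obtain _ | _ | s := s <;> obtain _ | _ | _ | t := t <;> simp [pow_succ] at h ⊢ <;> omega

theorem sq_eq_two_pow_add_one {x β : ℕ} (h : x ^ 2 = 2 ^ β + 1) : x = 3 ∧ β = 3 := by
  have hfac : (x + 1) * (x - 1) = 2 ^ β := by
    rw [← sq_sub_sq, one_pow, h, Nat.add_sub_cancel]
  obtain ⟨s, -, hs⟩ := (dvd_prime_pow prime_two).1 (Dvd.intro_left _ hfac)
  obtain ⟨t, -, ht⟩ := (dvd_prime_pow prime_two).1 (Dvd.intro _ hfac)
  obtain ⟨rfl, rfl⟩ := two_pow_eq_two_pow_add_two (s := s) (t := t) (by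
    have := Nat.two_pow_pos s
    omega)
  rw [ht, hs, ← pow_add] at hfac
  exact ⟨by omega, (Nat.pow_right_injective le_rfl hfac).symm⟩

theorem eq_one_of_pow_eq_two_pow_add_one {q m β : ℕ} (hq : Odd q) (hm : Odd m)
    (h : q ^ m = 2 ^ β + 1) : m = 1 := by
  have hgeom : (∑ i ∈ range m, q ^ i) * (q - 1) = 2 ^ β := by
    rw [geom_sum_mul_of_one_le hq.pos m, h, Nat.add_sub_cancel]
  have hsum_odd : Odd (∑ i ∈ range m, q ^ i) := by
    rw [odd_sum_iff_odd_card_odd, filter_true_of_mem fun i _ ↦ hq.pow, card_range]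
    exact hm
  have hsum : ∑ i ∈ range m, q ^ i = 1 :=
    (hsum_odd.coprime_two_right.pow_right β).eq_one_of_dvd (Dvd.intro _ hgeom)
  rw [hsum, one_mul] at hgeom
  have hq2 : 2 ≤ q := by
    have := Nat.two_pow_pos β
    omega
  exact Nat.pow_right_injective hq2 (show q ^ m = q ^ 1 by rw [pow_one]; omega)

theorem eq_three_of_pow_eq_two_pow_add_one {q m β : ℕ} (hq : Odd q) (hm : 2 ≤ m)
    (h : q ^ m = 2 ^ β + 1) : q = 3 ∧ m = 2 ∧ β = 3 := by
  rcases even_or_odd' m with ⟨k, rfl | rfl⟩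
  · obtain ⟨hqk, rfl⟩ := sq_eq_two_pow_add_one (x := q ^ k) (by rw [← pow_mul, mul_comm, h])
    obtain ⟨rfl, rfl⟩ := prime_three.pow_eq_iff.1 hqk
    exact ⟨rfl, rfl, rfl⟩
  · have := eq_one_of_pow_eq_two_pow_add_one hq (odd_two_mul_add_one k) h
    omega

theorem exists_eq_pow_eq_two_pow_add_one {a q : ℕ} (ha : 1 < a) (ha_odd : Odd a)
    (h : ∀ {p : ℕ}, p.Prime → p ∣ a * (a - 1) → p = 2 ∨ p = q) :
    ∃ m β, m ≠ 0 ∧ a = q ^ m ∧ q ^ m = 2 ^ β + 1 := by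
  obtain ⟨m, hm⟩ : ∃ m, a = q ^ m := by
    refine ⟨_, eq_prime_pow_of_unique_prime_dvd (by omega) fun hd hda ↦ ?_⟩
    refine (h hd (hda.mul_right _)).resolve_left ?_
    rintro rfl
    exact ha_odd.not_two_dvd_nat hda
  have hm0 : m ≠ 0 := by
    rintro rfl
    rw [pow_zero] at hm
    omega
  obtain ⟨β, hβ⟩ : ∃ β, a - 1 = 2 ^ β := by
    refine ⟨_, eq_prime_pow_of_unique_prime_dvd (by omega) fun {d} hd hda ↦ ?_⟩
    refine (h hd (hda.mul_left _)).resolve_right ?_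
    rintro rfl
    have hd_one : d ∣ a - (a - 1) := Nat.dvd_sub (hm ▸ dvd_pow_self _ hm0) hda
    exact hd.not_dvd_one (by rwa [Nat.sub_sub_self (by omega)] at hd_one)
  exact ⟨m, β, hm0, hm, by omega⟩

end Nat

theorem ap_two_fermat_general (a₁ a₂ q : ℕ) (h1 : 2 < a₁)
    (hap : 2 + a₂ = 2 * a₁) (hprim : Nat.Coprime 2 (a₁ - 2))
    (hqodd : Odd q)
    (hprimes : (2 * a₁ * a₂).primeFactors = {2, q}) :
    (a₁ = 9 ∧ a₂ = 16 ∧ q = 3) ∨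
      (∃ α : ℕ, 1 ≤ α ∧ a₁ = q ∧ q = 2 ^ α + 1 ∧ a₂ = 2 ^ (α + 1)) := by
  have ha₂ : a₂ = 2 * (a₁ - 1) := by omega
  have ha₁_odd : Odd a₁ := by
    obtain ⟨k, hk⟩ := Nat.coprime_two_left.1 hprim
    exact ⟨k + 1, by omega⟩
  have hprime_dvd {p : ℕ} (hp : p.Prime) (hpa : p ∣ a₁ * (a₁ - 1)) : p = 2 ∨ p = q := by
    have hpN : p ∣ 2 * a₁ * a₂ := hpa.trans ⟨4, by rw [ha₂]; ring⟩
    simpa [hprimes] using Nat.mem_primeFactors.2 ⟨hp, hpN, by simp; omega⟩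
  obtain ⟨m, β, hm0, hm, hpow⟩ :=
    Nat.exists_eq_pow_eq_two_pow_add_one (by omega) ha₁_odd hprime_dvd
  rcases (Nat.one_le_iff_ne_zero.2 hm0).eq_or_lt with rfl | hm2
  · rw [pow_one] at hm hpow
    refine .inr ⟨β, Nat.one_le_iff_ne_zero.2 ?_, hm, hpow, by rw [ha₂, hm, hpow, Nat.add_sub_cancel, pow_succ, mul_comm]⟩
    rintro rfl
    omega
  · obtain ⟨rfl, rfl, rfl⟩ := Nat.eq_three_of_pow_eq_two_pow_add_one hqodd hm2 hpow
    exact .inl ⟨by norm_num [hm], by norm_num [ha₂, hm], rfl⟩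

/-- If `(2, a₁, a₂)` is an arithmetic progression with `2 < a₁ < a₂`, primitive,
involving exactly the primes `2` and `q` (`q` odd), then either
`(a₁, a₂) = (9, 16)` with `q = 3`, or `a₁ = q = 2^α + 1` is a Fermat prime and
`a₂ = 2^(α+1)`. -/
theorem ap_two_fermat (a₁ a₂ q : ℕ) (h1 : 2 < a₁) (h2 : a₁ < a₂)
    (hap : 2 + a₂ = 2 * a₁) (hprim : Nat.Coprime 2 (a₁ - 2))
    (hq : q.Prime) (hqodd : Odd q)
    (hprimes : (2 * a₁ * a₂).primeFactors = {2, q}) :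
    (a₁ = 9 ∧ a₂ = 16 ∧ q = 3) ∨
      (∃ α : ℕ, 1 ≤ α ∧ a₁ = q ∧ q = 2 ^ α + 1 ∧ a₂ = 2 ^ (α + 1)) :=
  ap_two_fermat_general a₁ a₂ q h1 hap hprim hqodd hprimes
end

section
/- There is no primitive three-term arithmetic progression (a_0, a_1, a_2) of positive integers with a_0 ≥ 3 and a_0 < a_1 < a_2 whose terms involve at most two distinct primes in total. -/
/-!
Write `b = a₀ + d`, `c = a₀ + 2d`. Primitivity makes `b` coprime to both `a₀` and `c`, so
with only two primes available each of `a₀`, `b`, `c` is a prime power and `a₀`, `c` are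
powers of the same prime `p`. As `p` divides `c - a₀ = 2d` but not `d`, `p = 2`; then
`4 ∣ a₀` and `4 ∣ c` (both exceed `2`), so `2 ∣ d`, contradicting primitivity.
-/

namespace Finset

variable {α : Type*} [DecidableEq α] {s t u : Finset α}

theorem subset_of_card_union_union_le_two (hs : s.Nonempty) (ht : t.Nonempty)
    (hst : Disjoint s t) (htu : Disjoint t u) (h : (s ∪ t ∪ u).card ≤ 2) : u ⊆ s := by
  have hcard : 2 ≤ (s ∪ t).card := by
    rw [card_union_of_disjoint hst]
    exact Nat.add_le_add hs.card_pos ht.card_pos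
  have hunion : s ∪ t = s ∪ t ∪ u := eq_of_subset_of_card_le subset_union_left (h.trans hcard)
  intro x hx
  have hx' : x ∈ s ∪ t := hunion ▸ mem_union_right _ hx
  rcases mem_union.mp hx' with hxs | hxt
  · exact hxs
  · exact absurd hx (disjoint_left.mp htu hxt)

theorem eq_of_card_union_union_le_two (hs : s.Nonempty) (ht : t.Nonempty) (hu : u.Nonempty)
    (hst : Disjoint s t) (htu : Disjoint t u) (h : (s ∪ t ∪ u).card ≤ 2) : s = u := by
  refine (subset_of_card_union_union_le_two hu ht htu.symm hst.symm ?_).antisymm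
    (subset_of_card_union_union_le_two hs ht hst htu h)
  rwa [show u ∪ t ∪ s = s ∪ t ∪ u by ac_rfl]

end Finset

namespace Nat

theorem four_dvd_of_primeFactors_subset_two {n : ℕ} (hn : 2 < n) (h : n.primeFactors ⊆ {2}) :
    4 ∣ n := by
  obtain h4 | ⟨p, hp, hpn, hodd⟩ := four_dvd_or_exists_odd_prime_and_dvd_of_two_lt hn
  · exact h4
  · have : p = 2 := Finset.mem_singleton.mp (h (mem_primeFactors.mpr ⟨hp, hpn, by omega⟩))
    subst this
    exact absurd hodd (by decide)

theorem Prime.eq_two_of_dvd_of_dvd_add_two_mul {p a d : ℕ} (hp : p.Prime) (had : Coprime a d)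
    (hpa : p ∣ a) (hpc : p ∣ a + 2 * d) : p = 2 := by
  have hp2d : p ∣ 2 * d := (Nat.dvd_add_right hpa).mp hpc
  have hp2 : p ∣ 2 := (had.coprime_dvd_left hpa).dvd_of_dvd_mul_right hp2d
  exact (prime_dvd_prime_iff_eq hp prime_two).mp hp2

theorem Coprime.add_add_two_mul {a d : ℕ} (had : Coprime a d) : Coprime (a + d) (a + 2 * d) := by
  rw [two_mul, ← add_assoc]
  exact coprime_self_add_right.mpr (coprime_add_self_left.mpr had)

end Nat

theorem no_ap3_first_term_ge_three_general (a₀ d : ℕ) (ha : 3 ≤ a₀)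
    (hprim : Nat.Coprime a₀ d)
    (hprimes : (a₀ * (a₀ + d) * (a₀ + 2 * d)).primeFactors.card ≤ 2) :
    False := by
  have hab : Nat.Coprime a₀ (a₀ + d) := Nat.coprime_self_add_right.mpr hprim
  have hbc : Nat.Coprime (a₀ + d) (a₀ + 2 * d) := hprim.add_add_two_mul
  rw [Nat.primeFactors_mul (by positivity) (by omega), Nat.primeFactors_mul (by omega) (by omega)]
    at hprimes
  have hac : a₀.primeFactors = (a₀ + 2 * d).primeFactors :=
    Finset.eq_of_card_union_union_le_two (Nat.nonempty_primeFactors.mpr (by omega))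
      (Nat.nonempty_primeFactors.mpr (by omega)) (Nat.nonempty_primeFactors.mpr (by omega))
      hab.disjoint_primeFactors hbc.disjoint_primeFactors hprimes
  have htwo : a₀.primeFactors ⊆ {2} := fun p hp => by
    have hpc : p ∈ (a₀ + 2 * d).primeFactors := hac ▸ hp
    rw [Finset.mem_singleton]
    exact (Nat.prime_of_mem_primeFactors hp).eq_two_of_dvd_of_dvd_add_two_mul hprim
      (Nat.dvd_of_mem_primeFactors hp) (Nat.dvd_of_mem_primeFactors hpc)
  have h4a : 4 ∣ a₀ := Nat.four_dvd_of_primeFactors_subset_two (by omega) htwo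
  have h4c : 4 ∣ a₀ + 2 * d := Nat.four_dvd_of_primeFactors_subset_two (by omega) (hac ▸ htwo)
  have h2d : 2 ∣ d := by omega
  exact Nat.not_coprime_of_dvd_of_dvd (by norm_num) (dvd_trans (by norm_num) h4a) h2d hprim

/-- There is no primitive 3-term arithmetic progression of positive integers
with first term at least `3` involving at most two primes. -/
theorem no_ap3_first_term_ge_three (a₀ d : ℕ) (ha : 3 ≤ a₀) (hd : 1 ≤ d)
    (hprim : Nat.Coprime a₀ d)
    (hprimes : (a₀ * (a₀ + d) * (a₀ + 2 * d)).primeFactors.card ≤ 2) :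
    False :=
  no_ap3_first_term_ge_three_general a₀ d ha hprim hprimes
end

section
/- For every positive integer n and every finite abelian group C, the group G = G_n × C, where G_n = ⟨a, b | a^{2^n} = b^3 = 1, b^a = b^{-1}⟩, has conjugacy class size set cs(G) = {1, 2, 3}, and Z(G) = ⟨a^2⟩ × C. -/
/-- The set of conjugacy class sizes of a group. -/
def csSet (G : Type*) [Group G] : Set ℕ :=
  {n | ∃ g : G, n = Nat.card {h : G // IsConj g h}}

/-!
`N = ⟨b⟩` is a normal subgroup of order `3` and `H ⧸ N` is cyclic, generated by the image
of `a`, so every commutator lies in `N` and the class of `g` lies in the coset `N g`: classes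
have at most three elements. The class of `b` is `{b, b⁻¹}`, as it lies in `N` and avoids `1`;
the class of `a` is the whole coset `N a`, as no nontrivial element of `N` commutes with `a`
(it is inverted by `a` and has odd order). An element `a ^ k * y` with `y ∈ N` is central only
if `k` is even (otherwise `a` would commute with `b`) and then `y = 1`. An abelian direct factor
changes neither the class sizes nor the center of the first factor.
-/

open Subgroup
open scoped commutatorElement

theorem Prod.isConj_iff {G K : Type*} [Group G] [Group K] {p q : G × K} :
    IsConj p q ↔ IsConj p.1 q.1 ∧ IsConj p.2 q.2 := by
  simp only [_root_.isConj_iff, Prod.ext_iff, Prod.fst_mul, Prod.snd_mul, Prod.fst_inv,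
    Prod.snd_inv]
  exact ⟨fun ⟨c, h₁, h₂⟩ ↦ ⟨⟨c.1, h₁⟩, ⟨c.2, h₂⟩⟩,
    fun ⟨⟨c₁, h₁⟩, ⟨c₂, h₂⟩⟩ ↦ ⟨(c₁, c₂), h₁, h₂⟩⟩

theorem csSet_prod_of_commGroup (G C : Type*) [Group G] [CommGroup C] :
    csSet (G × C) = csSet G := by
  have hclass (g : G) (c : C) :
      Nat.card {p : G × C // IsConj (g, c) p} = Nat.card {h : G // IsConj g h} :=
    Nat.card_congr
      { toFun p := ⟨p.1.1, (Prod.isConj_iff.1 p.2).1⟩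
        invFun h := ⟨(h.1, c), Prod.isConj_iff.2 ⟨h.2, .refl c⟩⟩
        left_inv p := Subtype.ext <| Prod.ext rfl (isConj_iff_eq.1 (Prod.isConj_iff.1 p.2).2)
        right_inv _ := rfl }
  ext n
  constructor
  · rintro ⟨⟨g, c⟩, rfl⟩
    exact ⟨g, hclass g c⟩
  · rintro ⟨g, rfl⟩
    exact ⟨(g, 1), (hclass g 1).symm⟩

theorem natCard_isConj_eq_ncard {G : Type*} [Group G] (g : G) :
    Nat.card {h : G // IsConj g h} = (conjugatesOf g).ncard :=
  Nat.card_coe_set_eq _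

section ConjugatesModCommutator

variable {G : Type*} [Group G] {N : Subgroup G}

theorem conjugatesOf_subset_image_mul (hN : commutator G ≤ N) (g : G) :
    conjugatesOf g ⊆ (· * g) '' N := by
  intro h hh
  obtain ⟨x, rfl⟩ := isConj_iff.1 hh
  exact ⟨⁅x, g⁆, hN (commutator_mem_commutator (mem_top x) (mem_top g)),
    by simp [commutatorElement_def]⟩

theorem finite_conjugatesOf [Finite N] (hN : commutator G ≤ N) (g : G) :
    (conjugatesOf g).Finite :=
  ((N : Set G).toFinite.image _).subset (conjugatesOf_subset_image_mul hN g)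

theorem ncard_conjugatesOf_le [Finite N] (hN : commutator G ≤ N) (g : G) :
    (conjugatesOf g).ncard ≤ Nat.card N :=
  calc (conjugatesOf g).ncard ≤ ((· * g) '' (N : Set G)).ncard :=
        Set.ncard_le_ncard (conjugatesOf_subset_image_mul hN g)
    _ ≤ (N : Set G).ncard := Set.ncard_image_le
    _ = Nat.card N := Nat.card_coe_set_eq _

theorem ncard_conjugatesOf_le_natCard_sub_one [N.Normal] [Finite N] {g : G} (hg : g ∈ N)
    (hg₁ : g ≠ 1) : (conjugatesOf g).ncard ≤ Nat.card N - 1 := by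
  have hsub : conjugatesOf g ⊆ (N : Set G) \ {1} := by
    intro h hh
    obtain ⟨x, rfl⟩ := isConj_iff.1 hh
    exact ⟨Normal.conj_mem inferInstance g hg x,
      fun h1 ↦ hg₁ (isConj_one_left.1 (h1 ▸ hh))⟩
  calc (conjugatesOf g).ncard ≤ ((N : Set G) \ {1}).ncard := Set.ncard_le_ncard hsub
    _ = Nat.card N - 1 := by
      rw [Set.ncard_sdiff_singleton_of_mem (one_mem N), ← Nat.card_coe_set_eq,
        SetLike.coe_sort_coe]

theorem natCard_le_ncard_conjugatesOf {g : G} (hfin : (conjugatesOf g).Finite)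
    (hN : ∀ y ∈ N, Commute g y → y = 1) : Nat.card N ≤ (conjugatesOf g).ncard := by
  rw [← SetLike.coe_sort_coe, Nat.card_coe_set_eq]
  refine Set.ncard_le_ncard_of_injOn (fun x ↦ x * g * x⁻¹)
    (fun x _ ↦ isConj_iff.2 ⟨x, rfl⟩)
    (fun x hx y hy (hxy : x * g * x⁻¹ = y * g * y⁻¹) ↦ ?_) hfin
  have hcomm : Commute g (y⁻¹ * x) :=
    calc g * (y⁻¹ * x) = y⁻¹ * (y * g * y⁻¹) * x := by group
      _ = y⁻¹ * (x * g * x⁻¹) * x := by rw [hxy]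
      _ = y⁻¹ * x * g := by group
  exact inv_mul_eq_one.1 (hN _ (mul_mem (inv_mem hy) hx) hcomm) |>.symm

theorem zpowers_mk_eq_top_of_closure_pair_eq_top [N.Normal] {a b : G}
    (hgen : closure {a, b} = ⊤) (hb : b ∈ N) : zpowers (a : G ⧸ N) = ⊤ := by
  have hb' : ((b : G ⧸ N)) = 1 := (QuotientGroup.eq_one_iff b).2 hb
  rw [← map_top_of_surjective _ (QuotientGroup.mk'_surjective N), ← hgen, MonoidHom.map_closure,
    Set.image_pair, QuotientGroup.mk'_apply, QuotientGroup.mk'_apply, hb', Set.pair_comm,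
    closure_insert_one, zpowers_eq_closure]

theorem commutator_le_of_closure_pair_eq_top [N.Normal] {a b : G} (hgen : closure {a, b} = ⊤)
    (hb : b ∈ N) : commutator G ≤ N :=
  have : IsCyclic (G ⧸ N) :=
    isCyclic_iff_exists_zpowers_eq_top.2 ⟨_, zpowers_mk_eq_top_of_closure_pair_eq_top hgen hb⟩
  Normal.quotient_commutative_iff_commutator_le.1 inferInstance

end ConjugatesModCommutator

section ConjInvRelation

variable {H : Type*} [Group H] {a b : H}

theorem ne_one_of_natCard_eq {n : ℕ} (ha : a ^ 2 ^ n = 1) (hgen : closure {a, b} = ⊤)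
    (hcard : Nat.card H = 3 * 2 ^ n) : b ≠ 1 := by
  rintro rfl
  rw [Set.pair_comm, closure_insert_one, ← zpowers_eq_closure] at hgen
  have hdvd : 3 * 2 ^ n ∣ 2 ^ n := by
    rw [← hcard, ← card_top, ← hgen, Nat.card_zpowers]
    exact orderOf_dvd_of_pow_eq_one ha
  have hle : 3 * 2 ^ n ≤ 2 ^ n := Nat.le_of_dvd (Nat.two_pow_pos n) hdvd
  have hpos := Nat.two_pow_pos n
  omega

theorem eq_one_of_eq_inv_of_pow_three_eq_one {G : Type*} [Group G] {y : G} (h3 : y ^ 3 = 1)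
    (hy : y = y⁻¹) : y = 1 := by
  rwa [pow_succ, sq, mul_eq_one_iff_eq_inv.2 hy, one_mul] at h3

theorem semiconjBy_inv_of_inv_mul_mul_eq_inv (hba : a⁻¹ * b * a = b⁻¹) :
    SemiconjBy a⁻¹ b b⁻¹ := by
  rw [SemiconjBy, ← hba]
  group

theorem zpowers_normal_of_inv_mul_mul_eq_inv (hba : a⁻¹ * b * a = b⁻¹)
    (hgen : closure {a, b} = ⊤) : (zpowers b).Normal := by
  rw [← normalizer_eq_top_iff, eq_top_iff, ← hgen, closure_le]
  rintro x (rfl | rfl)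
  · rw [SetLike.mem_coe, ← inv_mem_iff, mem_normalizer_iff_map_conj_eq, MonoidHom.map_zpowers]
    change zpowers (x⁻¹ * b * x⁻¹⁻¹) = zpowers b
    rw [inv_inv, hba, zpowers_inv]
  · exact le_normalizer (mem_zpowers x)

theorem eq_one_of_commute_of_mem_zpowers (hb : b ^ 3 = 1) (hba : a⁻¹ * b * a = b⁻¹) {y : H}
    (hy : y ∈ zpowers b) (hc : Commute a y) : y = 1 := by
  obtain ⟨k, rfl⟩ := mem_zpowers_iff.1 hy
  have hinv : SemiconjBy a⁻¹ (b ^ k) (b ^ k)⁻¹ := by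
    simpa only [inv_zpow] using (semiconjBy_inv_of_inv_mul_mul_eq_inv hba).zpow_right k
  refine eq_one_of_eq_inv_of_pow_three_eq_one ?_
    (mul_right_cancel (hc.inv_left.eq.symm.trans hinv.eq))
  rw [← zpow_natCast, ← zpow_mul, mul_comm, zpow_mul, zpow_natCast, hb, one_zpow]

theorem commute_sq_of_inv_mul_mul_eq_inv (hba : a⁻¹ * b * a = b⁻¹) : Commute (a ^ 2) b := by
  have h := semiconjBy_inv_of_inv_mul_mul_eq_inv hba
  have h' : SemiconjBy a⁻¹ b⁻¹ b := by simpa only [inv_inv] using h.inv_right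
  have hsq : Commute (a⁻¹ ^ 2) b := by
    rw [sq]
    exact h'.mul_left h
  rwa [inv_pow, Commute.inv_left_iff] at hsq

theorem commutator_le_zpowers (hba : a⁻¹ * b * a = b⁻¹) (hgen : closure {a, b} = ⊤) :
    commutator H ≤ zpowers b :=
  have := zpowers_normal_of_inv_mul_mul_eq_inv hba hgen
  commutator_le_of_closure_pair_eq_top hgen (mem_zpowers b)

theorem csSet_eq_one_two_three (hb : b ^ 3 = 1) (hb₁ : b ≠ 1) (hba : a⁻¹ * b * a = b⁻¹)
    (hgen : closure {a, b} = ⊤) : csSet H = {1, 2, 3} := by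
  have := zpowers_normal_of_inv_mul_mul_eq_inv hba hgen
  have hcomm := commutator_le_zpowers hba hgen
  have hcardN : Nat.card (zpowers b) = 3 := by rw [Nat.card_zpowers, orderOf_eq_prime hb hb₁]
  have : Finite (zpowers b) := Nat.finite_of_card_ne_zero (by rw [hcardN]; norm_num)
  have hle (g : H) : (conjugatesOf g).ncard ≤ 3 := hcardN ▸ ncard_conjugatesOf_le hcomm g
  have hclass_b : (conjugatesOf b).ncard = 2 := by
    have hpair : ({b, b⁻¹} : Set H) ⊆ conjugatesOf b := by
      rintro _ (rfl | rfl)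
      exacts [mem_conjugatesOf_self, isConj_iff.2 ⟨a⁻¹, by rw [inv_inv, hba]⟩]
    have hne : b ≠ b⁻¹ := fun h ↦ hb₁ (eq_one_of_eq_inv_of_pow_three_eq_one hb h)
    have h2 := (Set.ncard_pair hne) ▸ Set.ncard_le_ncard hpair (finite_conjugatesOf hcomm b)
    have := hcardN ▸ ncard_conjugatesOf_le_natCard_sub_one (mem_zpowers b) hb₁
    omega
  have hclass_a : (conjugatesOf a).ncard = 3 :=
    le_antisymm (hle a) <| hcardN ▸ natCard_le_ncard_conjugatesOf (finite_conjugatesOf hcomm a)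
      fun _ hy hc ↦ eq_one_of_commute_of_mem_zpowers hb hba hy hc
  ext m
  simp only [csSet, natCard_isConj_eq_ncard, Set.mem_ofPred_eq, Set.mem_insert_iff,
    Set.mem_singleton_iff]
  constructor
  · rintro ⟨g, rfl⟩
    have := (Set.ncard_pos (finite_conjugatesOf hcomm g)).2 ⟨g, mem_conjugatesOf_self⟩
    have := hle g
    omega
  · rintro (rfl | rfl | rfl)
    exacts [⟨1, by simp [conjugatesOf]⟩, ⟨b, hclass_b.symm⟩, ⟨a, hclass_a.symm⟩]

theorem center_eq_closure_sq (hb : b ^ 3 = 1) (hb₁ : b ≠ 1) (hba : a⁻¹ * b * a = b⁻¹)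
    (hgen : closure {a, b} = ⊤) : center H = closure {a ^ 2} := by
  have := zpowers_normal_of_inv_mul_mul_eq_inv hba hgen
  have hsq := commute_sq_of_inv_mul_mul_eq_inv hba
  refine le_antisymm (fun z hz ↦ ?_) ?_
  · have hz' : ∀ g : H, Commute g z := mem_center_iff.1 hz
    have hz_mk : (z : H ⧸ zpowers b) ∈ zpowers (a : H ⧸ zpowers b) := by
      rw [zpowers_mk_eq_top_of_closure_pair_eq_top hgen (mem_zpowers b)]
      exact mem_top _
    obtain ⟨k, hk⟩ := mem_zpowers_iff.1 hz_mk
    set y := (a ^ k)⁻¹ * z with hy_def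
    have hy : y ∈ zpowers b := QuotientGroup.eq.1 (by rw [QuotientGroup.mk_zpow, hk])
    have hya : Commute a y := ((Commute.refl a).zpow_right k).inv_right.mul_right (hz' a)
    obtain ⟨m, rfl | rfl⟩ := Int.even_or_odd' k
    · have hy₁ : y = 1 := eq_one_of_commute_of_mem_zpowers hb hba hy hya
      rw [hy_def, inv_mul_eq_one] at hy₁
      rw [← hy₁, zpow_mul, zpow_ofNat, ← zpowers_eq_closure (a ^ 2)]
      exact zpow_mem_zpowers _ m
    · obtain ⟨j, hj⟩ := mem_zpowers_iff.1 hy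
      have hbak : Commute b (a ^ (2 * m + 1)) := by
        have hby : Commute b y := hj ▸ (Commute.refl b).zpow_right j
        simpa [y] using (hz' b).mul_right hby.inv_right
      have hab : Commute a b := by
        have ha_eq : a = ((a ^ 2) ^ m)⁻¹ * a ^ (2 * m + 1) := by
          rw [zpow_add, zpow_mul, zpow_one]
          group
        rw [ha_eq]
        exact (hsq.zpow_left m).inv_left.mul_left hbak.symm
      exact (hb₁ (eq_one_of_commute_of_mem_zpowers hb hba (mem_zpowers b) hab)).elim
  · rw [closure_le, Set.singleton_subset_iff, SetLike.mem_coe, ← centralizer_univ, ← coe_top,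
      ← hgen, centralizer_closure, mem_centralizer_iff]
    rintro _ (rfl | rfl)
    exacts [(Commute.self_pow _ 2).eq, hsq.eq.symm]

end ConjInvRelation

theorem cs_Gn_times_abelian_general (n : ℕ)
    (H C : Type*) [Group H] [CommGroup C]
    (a b : H) (ha : a ^ (2 ^ n) = 1) (hb : b ^ 3 = 1) (hba : a⁻¹ * b * a = b⁻¹)
    (hgen : Subgroup.closure ({a, b} : Set H) = ⊤)
    (hcard : Nat.card H = 3 * 2 ^ n) :
    csSet (H × C) = {1, 2, 3} ∧
      Subgroup.center (H × C) = (Subgroup.closure ({a ^ 2} : Set H)).prod ⊤ := by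
  have hb₁ : b ≠ 1 := ne_one_of_natCard_eq ha hgen hcard
  rw [csSet_prod_of_commGroup, Subgroup.center_prod, CommGroup.center_eq_top]
  exact ⟨csSet_eq_one_two_three hb hb₁ hba hgen,
    by rw [center_eq_closure_sq hb hb₁ hba hgen]⟩

/-- Let `G_n = ⟨a, b ∣ a^{2^n} = b^3 = 1, b^a = b⁻¹⟩` (characterized as a group of
order `3·2^n` generated by such `a, b`) and `C` a finite abelian group. Then
`cs(G_n × C) = {1, 2, 3}` and `Z(G_n × C) = ⟨a²⟩ × C`. -/
theorem cs_Gn_times_abelian (n : ℕ) (hn : 1 ≤ n)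
    (H C : Type*) [Group H] [Finite H] [CommGroup C] [Finite C]
    (a b : H) (ha : a ^ (2 ^ n) = 1) (hb : b ^ 3 = 1) (hba : a⁻¹ * b * a = b⁻¹)
    (hgen : Subgroup.closure ({a, b} : Set H) = ⊤)
    (hcard : Nat.card H = 3 * 2 ^ n) :
    csSet (H × C) = {1, 2, 3} ∧
      Subgroup.center (H × C) = (Subgroup.closure ({a ^ 2} : Set H)).prod ⊤ :=
  cs_Gn_times_abelian_general n H C a b ha hb hba hgen hcard
end

section
/- Let G = K ⋊ L be a finite group with K abelian normal, gcd(|K|, |L|) = 1, Z(G) < L, L/Z(G) cyclic, and G/Z(G) a Frobenius group with kernel KZ(G)/Z(G). Then cs(G) = {1, m, n} where m = |L : Z(G)| and n = |K|, and n ≡ 1 (mod m); in particular gcd(m, n) = 1. -/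
/-- The conjugate of a subgroup by a group element. -/
def conjSub {G : Type*} [Group G] (g : G) (H : Subgroup G) : Subgroup G :=
  H.map (MulAut.conj g).toMonoidHom

/-- `G` is a Frobenius group with kernel `K`: there is a proper non-trivial
complement `H` intersecting its distinct conjugates trivially, and
`K = {1} ∪ (G \ ⋃_g H^g)`. -/
def IsFrobeniusWithKernel (G : Type*) [Group G] (K : Subgroup G) : Prop :=
  ∃ H : Subgroup G, H ≠ ⊥ ∧ H ≠ ⊤ ∧
    (∀ g : G, g ∉ H → conjSub g H ⊓ H = ⊥) ∧
    (K : Set G) = {1} ∪ (Set.univ \ ⋃ g : G, (conjSub g H : Set G))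

/-!
Modulo `Z = Z(G)`, the Frobenius hypothesis says that the centralizer of every nontrivial `k ∈ K`
lies in `KZ`, and `L` is abelian because `L / Z` is cyclic. Hence a noncentral element of `KZ` has
centralizer `KZ`, of index `|L : Z|`, and a noncentral `l ∈ L` has centralizer `L`, of index
`|K|`. Every remaining element `k l` is conjugate to such an `l`, since `a ↦ a l a⁻¹ l⁻¹` is
injective, hence bijective, on `K`. Finally `K \ {1}` is a union of conjugacy classes, all of size
`|L : Z|`, so `|K| ≡ 1 (mod |L : Z|)`.
-/

section

open Subgroup MulAction

variable {G : Type*} [Group G]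

theorem mem_conjSub {g x : G} {H : Subgroup G} :
    x ∈ conjSub g H ↔ ∃ h ∈ H, g * h * g⁻¹ = x := by
  simp [conjSub, MulAut.conj_apply]

theorem IsFrobeniusWithKernel.mem_of_commute {N : Subgroup G} (hN : IsFrobeniusWithKernel G N)
    {x c : G} (hx : x ∈ N) (hx1 : x ≠ 1) (hcx : Commute c x) : c ∈ N := by
  obtain ⟨H, -, -, hdisj, hNH⟩ := hN
  have mem_N (y : G) : y ∈ N ↔ y = 1 ∨ ∀ g, y ∉ conjSub g H := by
    rw [← SetLike.mem_coe, hNH]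
    simp
  by_contra hc
  obtain ⟨hc1, a, hca⟩ : c ≠ 1 ∧ ∃ a, c ∈ conjSub a H := by simpa [mem_N] using hc
  obtain ⟨h, hh, rfl⟩ := mem_conjSub.mp hca
  have hxa : a⁻¹ * x * a ∉ H := fun hH =>
    ((mem_N x).mp hx).resolve_left hx1 a (mem_conjSub.mpr ⟨_, hH, by group⟩)
  -- `x` fixes `c = a h a⁻¹`, so `h` lies in the conjugate of `H` by `a⁻¹ x a ∉ H`.
  have hmem : h ∈ conjSub (a⁻¹ * x * a) H ⊓ H := by
    refine ⟨mem_conjSub.mpr ⟨h, hh, ?_⟩, hh⟩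
    calc a⁻¹ * x * a * h * (a⁻¹ * x * a)⁻¹ = a⁻¹ * (x * (a * h * a⁻¹) * x⁻¹) * a := by
          group
      _ = h := by rw [mul_inv_eq_of_eq_mul hcx.eq.symm]; group
  rw [hdisj _ hxa, mem_bot] at hmem
  exact hc1 (by rw [hmem]; group)

theorem commute_of_mul_zpow_inv_mem_center {x a b : G} {i j : ℤ}
    (ha : a * (x ^ i)⁻¹ ∈ center G) (hb : b * (x ^ j)⁻¹ ∈ center G) : Commute a b := by
  have hza : ∀ g, Commute g (a * (x ^ i)⁻¹) := mem_center_iff.mp ha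
  have hzb : ∀ g, Commute g (b * (x ^ j)⁻¹) := mem_center_iff.mp hb
  have hab : Commute (a * (x ^ i)⁻¹ * x ^ i) (b * (x ^ j)⁻¹ * x ^ j) :=
    (hza _).symm.mul_left ((hzb _).mul_right (Commute.zpow_zpow_self x i j))
  simpa using hab

theorem centralizer_le_sup_of_isFrobeniusWithKernel_quotient {K N : Subgroup G} [N.Normal]
    (hKN : Disjoint K N)
    (hfrob : IsFrobeniusWithKernel (G ⧸ N) ((K ⊔ N).map (QuotientGroup.mk' N)))
    {k : G} (hk : k ∈ K) (hk1 : k ≠ 1) : centralizer {k} ≤ K ⊔ N := by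
  intro c hc
  have hck : Commute (QuotientGroup.mk' N c) (QuotientGroup.mk' N k) :=
    Commute.map (mem_centralizer_singleton_iff.mp hc) _
  have hk1' : QuotientGroup.mk' N k ≠ 1 := fun h =>
    hk1 (disjoint_def.mp hKN hk ((QuotientGroup.eq_one_iff k).mp h))
  have := hfrob.mem_of_commute (mem_map_of_mem _ (mem_sup_left hk)) hk1' hck
  rwa [← mem_comap, comap_map_eq, QuotientGroup.ker_mk', sup_assoc, sup_idem] at this

theorem MulAction.card_eq_card_quotient_mul_of_index_stabilizer_eq {α β : Type*} [Group α]
    [MulAction α β] [Finite β] {m : ℕ} (h : ∀ b : β, (stabilizer α b).index = m) :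
    Nat.card β = Nat.card (orbitRel.Quotient α β) * m := by
  have := Fintype.ofFinite (orbitRel.Quotient α β)
  rw [Nat.card_congr (selfEquivSigmaOrbits α β), Nat.card_sigma]
  simp_rw [Nat.card_coe_set_eq, ← index_stabilizer, h]
  simp [Nat.card_eq_fintype_card]

theorem index_stabilizer_conjAct (g : G) :
    (stabilizer (ConjAct G) g).index = (centralizer {g}).index := by
  rw [centralizer_eq_comap_stabilizer]
  exact (index_comap_of_surjective _ ConjAct.toConjAct.surjective).symm

theorem card_isConj_eq_index_centralizer (g : G) :
    Nat.card {h : G // IsConj g h} = (centralizer {g}).index := by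
  rw [← index_stabilizer_conjAct, index_stabilizer, ← Nat.card_coe_set_eq]
  exact Nat.card_congr
    (Equiv.subtypeEquivRight fun h => by rw [ConjAct.mem_orbit_conjAct, isConj_comm])

theorem isConj_mul_of_forall_commute_eq_one {K : Subgroup G} [hKn : K.Normal] [Finite K] {l : G}
    (hl : ∀ k ∈ K, Commute k l → k = 1) {k : G} (hk : k ∈ K) : IsConj (k * l) l := by
  let f : K → K := fun a =>
    ⟨a * (l * (a : G)⁻¹ * l⁻¹), K.mul_mem a.2 (hKn.conj_mem _ (K.inv_mem a.2) l)⟩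
  have hf : Function.Injective f := by
    intro a b hab
    have hab : (a : G) * (l * (a : G)⁻¹ * l⁻¹) = b * (l * (b : G)⁻¹ * l⁻¹) :=
      congrArg Subtype.val hab
    have hcomm : Commute ((b : G)⁻¹ * a) l := by
      calc (b : G)⁻¹ * a * l = (b : G)⁻¹ * ((a : G) * (l * (a : G)⁻¹ * l⁻¹)) * l * a := by
            group
        _ = l * ((b : G)⁻¹ * a) := by rw [hab]; group
    simpa [inv_mul_eq_one, eq_comm] using hl _ (K.mul_mem (K.inv_mem b.2) a.2) hcomm
  obtain ⟨a, ha⟩ := (Finite.injective_iff_surjective.mp hf) ⟨k, hk⟩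
  refine isConj_iff.mpr ⟨(a : G)⁻¹, ?_⟩
  have ha : (a : G) * (l * (a : G)⁻¹ * l⁻¹) = k := congrArg Subtype.val ha
  rw [← ha]
  group

theorem IsCompl.isComplement' {K L : Subgroup G} [K.Normal] (h : IsCompl K L) :
    IsComplement' K L :=
  isComplement'_of_disjoint_and_mul_eq_univ h.disjoint
    (by rw [← normal_mul, h.sup_eq_top, coe_top])

theorem index_sup_eq_relIndex {K L N : Subgroup G} [K.Normal] [N.Normal] [Finite K]
    (hcompl : IsCompl K L) (hNL : N ≤ L) : (K ⊔ N).index = N.relIndex L := by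
  have hN : N.relIndex (K ⊔ N) * (K ⊔ N).index = N.relIndex L * L.index := by
    rw [relIndex_mul_index le_sup_right, relIndex_mul_index hNL]
  have hKN : N.relIndex (K ⊔ N) = Nat.card K := by
    rw [sup_comm, relIndex_sup_left, ← inf_relIndex_right,
      (hcompl.disjoint.mono_right hNL).symm.eq_bot, relIndex_bot_left]
  rwa [hKN, hcompl.isComplement'.index_eq_card, mul_comm,
    Nat.mul_right_cancel_iff Nat.card_pos] at hN

variable {K L : Subgroup G}

theorem mem_center_of_mem_sup_center (hKL : Disjoint K L) (hZL : center G ≤ L) {g : G}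
    (hg : g ∈ K ⊔ center G) (hgL : g ∈ L) : g ∈ center G := by
  obtain ⟨k, hk, z, hz, rfl⟩ := mem_sup_of_normal_right.mp hg
  have hkL : k ∈ L := by simpa using L.mul_mem hgL (L.inv_mem (hZL hz))
  rwa [disjoint_def.mp hKL hk hkL, one_mul]

theorem eq_one_of_commute_of_notMem_center (hKL : Disjoint K L) (hZL : center G ≤ L)
    (hKcent : ∀ k ∈ K, k ≠ 1 → centralizer {k} ≤ K ⊔ center G) {k l : G} (hk : k ∈ K)
    (hl : l ∈ L) (hlZ : l ∉ center G) (hkl : Commute k l) : k = 1 := by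
  by_contra hk1
  have hlK : l ∈ K ⊔ center G := hKcent k hk hk1 (mem_centralizer_singleton_iff.mpr hkl.symm)
  exact hlZ (mem_center_of_mem_sup_center hKL hZL hlK hl)

theorem centralizer_eq_sup_center (hKab : ∀ x ∈ K, ∀ y ∈ K, x * y = y * x)
    (hKcent : ∀ k ∈ K, k ≠ 1 → centralizer {k} ≤ K ⊔ center G) {g : G}
    (hg : g ∈ K ⊔ center G) (hgZ : g ∉ center G) : centralizer {g} = K ⊔ center G := by
  obtain ⟨k, hk, z, hz, rfl⟩ := mem_sup_of_normal_right.mp hg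
  have hzc : ∀ c, Commute c z := mem_center_iff.mp hz
  apply le_antisymm
  · have hk1 : k ≠ 1 := by
      rintro rfl
      exact hgZ (by rwa [one_mul])
    refine le_trans (fun c hc => ?_) (hKcent k hk hk1)
    have hckz : Commute c (k * z) := mem_centralizer_singleton_iff.mp hc
    have hck : Commute c k := by simpa using hckz.mul_right (hzc c).inv_right
    exact mem_centralizer_singleton_iff.mpr hck
  · refine sup_le (fun c hc => ?_) (center_le_centralizer _)
    have hck : Commute c k := hKab c hc k hk
    exact mem_centralizer_singleton_iff.mpr (hck.mul_right (hzc c))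

theorem centralizer_eq_of_mem_of_notMem_center [K.Normal] (hcompl : IsCompl K L)
    (hZL : center G ≤ L) (hLab : ∀ a ∈ L, ∀ b ∈ L, Commute a b)
    (hKcent : ∀ k ∈ K, k ≠ 1 → centralizer {k} ≤ K ⊔ center G) {l : G} (hl : l ∈ L)
    (hlZ : l ∉ center G) : centralizer {l} = L := by
  apply le_antisymm
  · intro c hc
    obtain ⟨k, hk, l', hl', rfl⟩ := mem_sup_of_normal_left.mp (hcompl.sup_eq_top ▸ mem_top c)
    have hkl : Commute k l := by
      have hc : Commute (k * l') l := mem_centralizer_singleton_iff.mp hc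
      simpa using hc.mul_left (hLab l' hl' l hl).inv_left
    rwa [eq_one_of_commute_of_notMem_center hcompl.disjoint hZL hKcent hk hl hlZ hkl, one_mul]
  · exact fun c hc => mem_centralizer_singleton_iff.mpr (hLab c hc l hl)

theorem card_isConj_of_mem_of_notMem_center [Finite G] [K.Normal] (hcompl : IsCompl K L)
    (hZL : center G ≤ L) (hLab : ∀ a ∈ L, ∀ b ∈ L, Commute a b)
    (hKcent : ∀ k ∈ K, k ≠ 1 → centralizer {k} ≤ K ⊔ center G) {l : G} (hl : l ∈ L)
    (hlZ : l ∉ center G) : Nat.card {h : G // IsConj l h} = Nat.card K := by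
  rw [card_isConj_eq_index_centralizer,
    centralizer_eq_of_mem_of_notMem_center hcompl hZL hLab hKcent hl hlZ,
    hcompl.isComplement'.index_eq_card]

theorem card_isConj_of_notMem_sup_center [Finite G] [K.Normal] (hcompl : IsCompl K L)
    (hZL : center G ≤ L) (hLab : ∀ a ∈ L, ∀ b ∈ L, Commute a b)
    (hKcent : ∀ k ∈ K, k ≠ 1 → centralizer {k} ≤ K ⊔ center G) {g : G}
    (hg : g ∉ K ⊔ center G) : Nat.card {h : G // IsConj g h} = Nat.card K := by
  obtain ⟨k, hk, l, hl, rfl⟩ := mem_sup_of_normal_left.mp (hcompl.sup_eq_top ▸ mem_top g)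
  have hlZ : l ∉ center G := fun h => hg (mul_mem_sup hk h)
  have hconj : IsConj (k * l) l := isConj_mul_of_forall_commute_eq_one
    (fun _ hk' => eq_one_of_commute_of_notMem_center hcompl.disjoint hZL hKcent hk' hl hlZ) hk
  rw [← card_isConj_of_mem_of_notMem_center hcompl hZL hLab hKcent hl hlZ]
  exact Nat.card_congr (Equiv.subtypeEquivRight fun h => ⟨hconj.symm.trans, hconj.trans⟩)

theorem csSet_eq [Finite G] [K.Normal] (hKab : ∀ x ∈ K, ∀ y ∈ K, x * y = y * x)
    (hcompl : IsCompl K L) (hZL : center G < L) (hLab : ∀ a ∈ L, ∀ b ∈ L, Commute a b)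
    (hKcent : ∀ k ∈ K, k ≠ 1 → centralizer {k} ≤ K ⊔ center G) :
    csSet G = {1, (center G).relIndex L, Nat.card K} := by
  have card_of_mem_center {g : G} (hg : g ∈ center G) : Nat.card {h : G // IsConj g h} = 1 := by
    rw [card_isConj_eq_index_centralizer,
      centralizer_eq_top_iff_subset.mpr (Set.singleton_subset_iff.mpr hg), index_top]
  have card_of_mem_sup {g : G} (hg : g ∈ K ⊔ center G) (hgZ : g ∉ center G) :
      Nat.card {h : G // IsConj g h} = (center G).relIndex L := by
    rw [card_isConj_eq_index_centralizer, centralizer_eq_sup_center hKab hKcent hg hgZ,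
      index_sup_eq_relIndex hcompl hZL.le]
  have hK_ne_bot : K ≠ ⊥ := by
    rintro rfl
    obtain rfl : L = ⊤ := by simpa using hcompl.sup_eq_top
    exact hZL.ne (eq_top_iff.mpr fun g _ =>
      mem_center_iff.mpr fun h => hLab h (mem_top h) g (mem_top g))
  obtain ⟨⟨k, hk⟩, hk1⟩ := ne_bot_iff_exists_ne_one.mp hK_ne_bot
  obtain ⟨l, hl, hlZ⟩ := SetLike.exists_of_lt hZL
  ext n
  constructor
  · rintro ⟨g, rfl⟩
    by_cases hgZ : g ∈ center G
    · exact Or.inl (card_of_mem_center hgZ)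
    by_cases hg : g ∈ K ⊔ center G
    · exact Or.inr (Or.inl (card_of_mem_sup hg hgZ))
    · exact Or.inr (Or.inr (card_isConj_of_notMem_sup_center hcompl hZL.le hLab hKcent hg))
  · rintro (rfl | rfl | rfl)
    · exact ⟨1, (card_of_mem_center (one_mem _)).symm⟩
    · refine ⟨k, (card_of_mem_sup (mem_sup_left hk) fun hkZ => hk1 ?_).symm⟩
      exact Subtype.ext (disjoint_def.mp (hcompl.disjoint.mono_right hZL.le) hk hkZ)
    · exact ⟨l, (card_isConj_of_mem_of_notMem_center hcompl hZL.le hLab hKcent hl hlZ).symm⟩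

theorem card_mod_relIndex_eq_one [Finite G] [hKn : K.Normal]
    (hKab : ∀ x ∈ K, ∀ y ∈ K, x * y = y * x) (hcompl : IsCompl K L) (hZL : center G < L)
    (hKcent : ∀ k ∈ K, k ≠ 1 → centralizer {k} ≤ K ⊔ center G) :
    Nat.card K % (center G).relIndex L = 1 := by
  have hKZ : Disjoint K (center G) := hcompl.disjoint.mono_right hZL.le
  let S : SubMulAction (ConjAct G) G :=
    { carrier := (K : Set G) \ {1}
      smul_mem' := fun c g ⟨hg, hg1⟩ =>
        ⟨hKn.conj_mem g hg _, by simpa [ConjAct.smul_def] using hg1⟩ }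
  have hS : Nat.card S = Nat.card (orbitRel.Quotient (ConjAct G) S) * (center G).relIndex L := by
    refine card_eq_card_quotient_mul_of_index_stabilizer_eq fun x => ?_
    obtain ⟨hx, hx1⟩ := x.2
    rw [SubMulAction.stabilizer_of_subMul, index_stabilizer_conjAct,
      centralizer_eq_sup_center hKab hKcent (mem_sup_left hx)
        fun hxZ => hx1 (disjoint_def.mp hKZ hx hxZ),
      index_sup_eq_relIndex hcompl hZL.le]
  have hK1 : Nat.card S + 1 = Nat.card K := by
    change Nat.card ((K : Set G) \ {1} : Set G) + 1 = _
    rw [Nat.card_coe_set_eq, Set.ncard_sdiff_singleton_add_one (one_mem K)]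
    exact (Nat.card_coe_set_eq _).symm
  have hm : 1 < (center G).relIndex L :=
    one_lt_index_of_ne_top fun h => hZL.not_ge (subgroupOf_eq_top.mp h)
  rw [← hK1, hS, Nat.mul_add_mod', Nat.mod_eq_of_lt hm]

end

theorem cs_of_frobenius_structure_general (G : Type*) [Group G] [Finite G]
    (K L : Subgroup G) (hKn : K.Normal)
    (hKab : ∀ x ∈ K, ∀ y ∈ K, x * y = y * x)
    (hcompl : IsCompl K L)
    (hZL : Subgroup.center G < L)
    (hcyc : ∃ x ∈ L, ∀ y ∈ L, ∃ k : ℤ, y * (x ^ k)⁻¹ ∈ Subgroup.center G)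
    (hfrob : IsFrobeniusWithKernel (G ⧸ Subgroup.center G)
      ((K ⊔ Subgroup.center G).map (QuotientGroup.mk' (Subgroup.center G)))) :
    csSet G = {1, (Subgroup.center G).relIndex L, Nat.card K} ∧
      Nat.card K % (Subgroup.center G).relIndex L = 1 ∧
      Nat.Coprime ((Subgroup.center G).relIndex L) (Nat.card K) := by
  obtain ⟨x, -, hx⟩ := hcyc
  have hLab : ∀ a ∈ L, ∀ b ∈ L, Commute a b := fun a ha b hb =>
    let ⟨_, hi⟩ := hx a ha
    let ⟨_, hj⟩ := hx b hb
    commute_of_mul_zpow_inv_mem_center hi hj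
  have hKcent : ∀ k ∈ K, k ≠ 1 → Subgroup.centralizer {k} ≤ K ⊔ Subgroup.center G :=
    fun _ hk hk1 => centralizer_le_sup_of_isFrobeniusWithKernel_quotient
      (hcompl.disjoint.mono_right hZL.le) hfrob hk hk1
  have hmod := card_mod_relIndex_eq_one hKab hcompl hZL hKcent
  refine ⟨csSet_eq hKab hcompl hZL hLab hKcent, hmod, ?_⟩
  rw [Nat.Coprime, Nat.gcd_rec, hmod, Nat.gcd_one_left]

/-- Let `G = K ⋊ L` be finite with `K` abelian normal, `gcd(|K|,|L|) = 1`,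
`Z(G) < L`, `L/Z(G)` cyclic, and `G/Z(G)` Frobenius with kernel `KZ(G)/Z(G)`.
Then `cs(G) = {1, m, n}` where `m = |L : Z(G)|`, `n = |K|`, `n ≡ 1 (mod m)`,
and in particular `gcd(m, n) = 1`. -/
theorem cs_of_frobenius_structure (G : Type*) [Group G] [Finite G]
    (K L : Subgroup G) (hKn : K.Normal)
    (hKab : ∀ x ∈ K, ∀ y ∈ K, x * y = y * x)
    (hcompl : IsCompl K L)
    (hcop : Nat.Coprime (Nat.card K) (Nat.card L))
    (hZL : Subgroup.center G < L)
    (hcyc : ∃ x ∈ L, ∀ y ∈ L, ∃ k : ℤ, y * (x ^ k)⁻¹ ∈ Subgroup.center G)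
    (hfrob : IsFrobeniusWithKernel (G ⧸ Subgroup.center G)
      ((K ⊔ Subgroup.center G).map (QuotientGroup.mk' (Subgroup.center G)))) :
    csSet G = {1, (Subgroup.center G).relIndex L, Nat.card K} ∧
      Nat.card K % (Subgroup.center G).relIndex L = 1 ∧
      Nat.Coprime ((Subgroup.center G).relIndex L) (Nat.card K) :=
  cs_of_frobenius_structure_general G K L hKn hKab hcompl hZL hcyc hfrob
end

section
/- For every positive integer n, there exists a finite group G such that {1, 2, ..., n} ⊆ cs(G). -/
theorem isConj_pi_iff {ι : Type*} {G : ι → Type*} [∀ i, Group (G i)] {g h : ∀ i, G i} :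
    IsConj g h ↔ ∀ i, IsConj (g i) (h i) := by
  refine ⟨fun hc i => ?_, fun hc => ?_⟩
  · obtain ⟨c, rfl⟩ := isConj_iff.1 hc
    exact isConj_iff.2 ⟨c i, rfl⟩
  · choose c hc using fun i => isConj_iff.1 (hc i)
    exact isConj_iff.2 ⟨c, funext hc⟩

theorem Nat.card_isConj_pi {ι : Type*} [Fintype ι] {G : ι → Type*} [∀ i, Group (G i)]
    (g : ∀ i, G i) :
    Nat.card {h // IsConj g h} = ∏ i, Nat.card {x // IsConj (g i) x} := by
  rw [← Nat.card_pi]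
  exact Nat.card_congr
    { toFun h i := ⟨h.1 i, isConj_pi_iff.1 h.2 i⟩
      invFun h := ⟨fun i => (h i).1, isConj_pi_iff.2 fun i => (h i).2⟩ }

theorem Nat.card_isConj_one (G : Type*) [Group G] : Nat.card {h : G // IsConj 1 h} = 1 := by
  simp only [isConj_one_right]
  exact Nat.card_unique

theorem Nat.card_isConj_mulSingle {ι : Type*} [Fintype ι] [DecidableEq ι] {G : ι → Type*}
    [∀ i, Group (G i)] (j : ι) (a : G j) :
    Nat.card {h // IsConj (Pi.mulSingle j a) h} = Nat.card {x // IsConj a x} := by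
  rw [Nat.card_isConj_pi, Fintype.prod_eq_single j fun i hi => ?_, Pi.mulSingle_eq_same]
  rw [Pi.mulSingle_eq_of_ne hi, Nat.card_isConj_one]

namespace RegularWreathProduct

variable {D Q : Type*} [Group Q] [DecidableEq Q]

theorem mk_mulSingle_injective [Group D] {a : D} (ha : a ≠ 1) :
    Function.Injective fun q : Q => (⟨Pi.mulSingle q a, 1⟩ : D ≀ᵣ Q) := by
  intro p q hpq
  by_contra hne
  have := congr_fun (congr_arg left hpq) p
  simp [Pi.mulSingle_eq_of_ne hne, ha] at this

section CommGroup

variable [CommGroup D]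

theorem conj_mulSingle (c : D ≀ᵣ Q) (p : Q) (a : D) :
    c * ⟨Pi.mulSingle p a, 1⟩ * c⁻¹ = ⟨Pi.mulSingle (c.right * p) a, 1⟩ := by
  have shift : (fun x => (Pi.mulSingle p a : Q → D) (c.right⁻¹ * x)) =
      Pi.mulSingle (c.right * p) a := by
    simpa [Function.comp_def] using Pi.mulSingle_comp_equiv (Equiv.mulLeft c.right⁻¹) p a
  ext x
  · simp [mul_def, shift]
  · simp

theorem isConj_mulSingle_iff (a : D) (g : D ≀ᵣ Q) :
    IsConj (⟨Pi.mulSingle 1 a, 1⟩ : D ≀ᵣ Q) g ↔ ∃ q : Q, ⟨Pi.mulSingle q a, 1⟩ = g := by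
  refine ⟨fun hc => ?_, fun ⟨q, hq⟩ => ?_⟩
  · obtain ⟨c, rfl⟩ := isConj_iff.1 hc
    exact ⟨c.right, by rw [conj_mulSingle, mul_one]⟩
  · refine isConj_iff.2 ⟨⟨1, q⟩, ?_⟩
    rw [conj_mulSingle, mul_one, hq]

theorem card_isConj_mulSingle {a : D} (ha : a ≠ 1) :
    Nat.card {g // IsConj (⟨Pi.mulSingle 1 a, 1⟩ : D ≀ᵣ Q) g} = Nat.card Q := by
  simp_rw [isConj_mulSingle_iff]
  exact Nat.card_range_of_injective (mk_mulSingle_injective ha)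

end CommGroup

end RegularWreathProduct

theorem exists_group_cs_contains_Icc_general (n : ℕ) :
    ∃ (G : Type) (_ : Group G) (_ : Finite G),
      ∀ k : ℕ, 1 ≤ k → k ≤ n → k ∈ csSet G := by
  refine ⟨∀ i : Fin n, Multiplicative (ZMod 2) ≀ᵣ Multiplicative (ZMod (i + 1)),
    inferInstance, inferInstance, fun k hk hkn => ?_⟩
  let j : Fin n := ⟨k - 1, by omega⟩
  refine ⟨Pi.mulSingle j ⟨Pi.mulSingle 1 (Multiplicative.ofAdd 1), 1⟩, ?_⟩
  rw [Nat.card_isConj_mulSingle, RegularWreathProduct.card_isConj_mulSingle (by decide),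
    Nat.card_eq_fintype_card, Fintype.card_multiplicative, ZMod.card]
  exact (Nat.sub_add_cancel hk).symm

/-- For every positive integer `n` there is a finite group `G` with
`{1, 2, …, n} ⊆ cs(G)`. -/
theorem exists_group_cs_contains_Icc (n : ℕ) (hn : 1 ≤ n) :
    ∃ (G : Type) (_ : Group G) (_ : Finite G),
      ∀ k : ℕ, 1 ≤ k → k ≤ n → k ∈ csSet G :=
  exists_group_cs_contains_Icc_general n
end

section
/- Let G be a finite group with a normal subgroup H such that G/H ≅ S_3 and such that every element g ∈ G whose image in G/H has order 2 satisfies |g^G| = 6 and |H : C_H(g)| = 2. Let T be the set of such elements g. Then C_H(T) = Z(G), the quotient H/Z(G) is an elementary abelian 2-group, and H ≠ Z(G). -/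
/-!
The involutions of `S₃` generate it, so their preimage `T` generates `G` (it is a union of
`H`-cosets) and `C_G(T) = Z(G)`; as `S₃` has trivial centre, `Z(G) ≤ H`. An index-two subgroup
contains all squares, so `x² ∈ C_H(g)` for every `x ∈ H` and `g ∈ T`. Finally `H ≤ Z(G)`
would make each `|H : C_H(g)|` equal to `1`.
-/

open Equiv

theorem Subgroup.closure_preimage_eq_top_of_surjective {G Q : Type*} [Group G] [Group Q]
    {f : G →* Q} (hf : Function.Surjective f) {S : Set Q} (hS : closure S = ⊤)
    (hne : S.Nonempty) :
    closure (f ⁻¹' S) = ⊤ := by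
  obtain ⟨t, ht⟩ := hne.preimage hf
  have hker : f.ker ≤ closure (f ⁻¹' S) := fun k hk => by
    have htk : t * k ∈ f ⁻¹' S := by
      rwa [Set.mem_preimage, map_mul, MonoidHom.mem_ker.1 hk, mul_one]
    simpa using mul_mem (inv_mem (subset_closure ht)) (subset_closure htk)
  rw [← sup_eq_left.2 hker, ← comap_map_eq, MonoidHom.map_closure, Set.image_preimage_eq S hf,
    hS, comap_top]

theorem Equiv.Perm.closure_setOf_orderOf_eq_two {α : Type*} [DecidableEq α] [Finite α] :
    Subgroup.closure {σ : Perm α | orderOf σ = 2} = ⊤ :=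
  eq_top_mono (Subgroup.closure_mono fun _ hσ => Perm.IsSwap.orderOf hσ) closure_isSwap

theorem Equiv.Perm.center_eq_bot {α : Type*} [DecidableEq α] (h : 3 ≤ ENat.card α) :
    Subgroup.center (Perm α) = ⊥ := by
  refine eq_bot_iff.2 fun σ hσ => Subgroup.mem_bot.2 <| Perm.ext fun a => ?_
  by_contra hne
  obtain ⟨c, hca, hcb⟩ := ENat.exists_ne_ne_of_three_le h a (σ a)
  -- `σ` commutes with `swap a c`; evaluating at `c` forces `σ c = σ a`
  have hcomm := congrArg (· c) (Subgroup.mem_center_iff.1 hσ (swap a c))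
  simp only [Perm.coe_mul, Function.comp_apply, swap_apply_right] at hcomm
  have hσc : σ c = σ a :=
    (swap a c).injective (hcomm.trans (swap_apply_of_ne_of_ne hne (Ne.symm hcb)).symm)
  exact hca (σ.injective hσc)

theorem Subgroup.center_le_ker {G Q : Type*} [Group G] [Group Q] {f : G →* Q}
    (hf : Function.Surjective f) (hQ : center Q = ⊥) : center G ≤ f.ker := fun z hz => by
  refine MonoidHom.mem_ker.2 (Subgroup.mem_bot.1 (hQ ▸ mem_center_iff.2 fun q => ?_))
  obtain ⟨g, rfl⟩ := hf q
  rw [← map_mul, ← map_mul, mem_center_iff.1 hz g]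

theorem step_A3_general (G : Type*) [Group G]
    (H : Subgroup G) [H.Normal]
    (iso : (G ⧸ H) ≃* Equiv.Perm (Fin 3))
    (T : Set G) (hT : T = {g : G | orderOf (QuotientGroup.mk g : G ⧸ H) = 2})
    (hcent : ∀ g ∈ T, (Subgroup.centralizer {g}).relIndex H = 2) :
    Subgroup.centralizer T ⊓ H = Subgroup.center G ∧
      (∀ x ∈ H, x ^ 2 ∈ Subgroup.center G) ∧
      H ≠ Subgroup.center G := by
  set f : G →* Perm (Fin 3) := iso.toMonoidHom.comp (QuotientGroup.mk' H)
  have hf : Function.Surjective f := iso.surjective.comp (QuotientGroup.mk'_surjective H)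
  have hker : f.ker = H := by ext; simp [f]
  have hTf : T = f ⁻¹' {σ | orderOf σ = 2} := by ext; simp [hT, f, MulEquiv.orderOf_eq]
  have hne : {σ : Perm (Fin 3) | orderOf σ = 2}.Nonempty :=
    ⟨swap 0 1, Perm.IsSwap.orderOf ⟨0, 1, by decide, rfl⟩⟩
  have hZ : Subgroup.centralizer T = Subgroup.center G := by
    rw [← Subgroup.centralizer_closure, hTf, Subgroup.closure_preimage_eq_top_of_surjective hf
      Perm.closure_setOf_orderOf_eq_two hne, Subgroup.coe_top, Subgroup.centralizer_univ]
  refine ⟨?_, fun x hx => ?_, fun hHZ => ?_⟩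
  · rw [hZ, inf_eq_left, ← hker]
    exact Subgroup.center_le_ker hf (Perm.center_eq_bot (by simp))
  · refine hZ ▸ Subgroup.mem_centralizer_iff.2 fun g hg => ?_
    have hsq := Subgroup.sq_mem_of_index_two (hcent g hg) ⟨x, hx⟩
    exact (Subgroup.mem_centralizer_singleton_iff.1 (Subgroup.mem_subgroupOf.1 hsq)).symm
  · obtain ⟨g, hg⟩ := hTf ▸ hne.preimage hf
    have hle : H ≤ Subgroup.centralizer {g} := hHZ ▸ Subgroup.center_le_centralizer _
    simpa [Subgroup.relIndex_eq_one.2 hle] using hcent g hg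

/-- Step A3: let `G` be finite with `H ⊴ G`, `G/H ≅ S₃`, and suppose every
`g ∈ G` whose image in `G/H` has order 2 satisfies `|g^G| = 6` and
`|H : C_H(g)| = 2`. With `T` the set of such `g`, we have `C_H(T) = Z(G)`,
`H/Z(G)` is elementary abelian 2 (i.e. `x² ∈ Z(G)` for all `x ∈ H`), and
`H ≠ Z(G)`. -/
theorem step_A3 (G : Type*) [Group G] [Finite G]
    (H : Subgroup G) [H.Normal]
    (iso : (G ⧸ H) ≃* Equiv.Perm (Fin 3))
    (T : Set G) (hT : T = {g : G | orderOf (QuotientGroup.mk g : G ⧸ H) = 2})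
    (hclass : ∀ g ∈ T, Nat.card {h : G // IsConj g h} = 6)
    (hcent : ∀ g ∈ T, (Subgroup.centralizer {g}).relIndex H = 2) :
    Subgroup.centralizer T ⊓ H = Subgroup.center G ∧
      (∀ x ∈ H, x ^ 2 ∈ Subgroup.center G) ∧
      H ≠ Subgroup.center G :=
  step_A3_general G H iso T hT hcent
end

section
/- Let A be a finite nonabelian group and B < A a proper subgroup such that for every a ∈ A \ B the centralizer C_A(a) has index 2 in A. Then the derived subgroup A' has order 2. -/
/-!
If `C(x)` has index two, `⁅x, w⁆` depends only on whether `w ∈ C(x)`: it is `1` or a fixed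
`z_x ≠ 1`. As `y * y ∈ C(x)`, every `y ∉ C(x)` inverts `z_x`, while `x` commutes with
`z_x = ⁅x, x * y⁆`. If `C(y)` has index two as well, `y` commutes with `z_y = z_x⁻¹`, so `z_x` is
an involution; it is central because the complement of `C(x)` generates the group.
For `x, x'` outside `B` with `x' ∉ C(x)` we get `z_x = ⁅x, x'⁆ = ⁅x', x⁆ = z_x'`; if they commute,
compare both with some `c` outside `B`, `C(x)` and `C(x')`. Hence every commutator with an entry
outside `B` lies in `⟨z⟩`, and as `A \ B` generates `A`, `A' = ⟨z⟩` has order two.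
-/

open scoped commutatorElement

section

open Subgroup

variable {G : Type*} [Group G]

theorem Subgroup.ne_top_of_index_eq_two {H : Subgroup G} (h : H.index = 2) : H ≠ ⊤ := by
  rintro rfl
  simp at h

theorem Subgroup.exists_notMem_and_notMem {H K : Subgroup G} (hH : H ≠ ⊤) (hK : K ≠ ⊤) :
    ∃ g, g ∉ H ∧ g ∉ K := by
  obtain ⟨u, -, hu⟩ := SetLike.exists_of_lt hH.lt_top
  obtain ⟨v, -, hv⟩ := SetLike.exists_of_lt hK.lt_top
  by_cases huK : u ∈ K
  · by_cases hvH : v ∈ H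
    · exact ⟨u * v, by rwa [mul_mem_cancel_right hvH], by rwa [mul_mem_cancel_left huK]⟩
    · exact ⟨v, hvH, hv⟩
  · exact ⟨u, hu, huK⟩

theorem Subgroup.exists_notMem_and_notMem_and_notMem {B H K : Subgroup G} (hH : H ≠ ⊤) (hK : K ≠ ⊤)
    {x : G} (hxB : x ∉ B) (hxH : x ∈ H) (hxK : x ∈ K) : ∃ c, c ∉ B ∧ c ∉ H ∧ c ∉ K := by
  obtain ⟨t, htH, htK⟩ := exists_notMem_and_notMem hH hK
  by_cases htB : t ∈ B
  · exact ⟨x * t, by rwa [mul_mem_cancel_right htB], by rwa [mul_mem_cancel_left hxH],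
      by rwa [mul_mem_cancel_left hxK]⟩
  · exact ⟨t, htB, htH, htK⟩

theorem Subgroup.eq_top_of_forall_notMem {H K : Subgroup G} (hH : H ≠ ⊤)
    (h : ∀ g, g ∉ H → g ∈ K) : K = ⊤ := by
  obtain ⟨u, -, hu⟩ := SetLike.exists_of_lt hH.lt_top
  refine (eq_top_iff' K).mpr fun g => ?_
  by_cases hg : g ∈ H
  · rw [← mul_inv_cancel_right g u]
    exact K.mul_mem (h _ (by rwa [mul_mem_cancel_left hg])) (h _ (by rwa [inv_mem_iff]))
  · exact h g hg

theorem Subgroup.normal_of_le_center {N : Subgroup G} (h : N ≤ center G) : N.Normal :=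
  ⟨fun n hn g => by rwa [mem_center_iff.mp (h hn) g, mul_inv_cancel_right]⟩

theorem Subgroup.mem_centralizer_singleton_comm {x y : G} :
    y ∈ centralizer {x} ↔ x ∈ centralizer {y} := by
  simp only [mem_centralizer_singleton_iff, eq_comm]

theorem commutatorElement_eq_one_iff_mem_centralizer {x y : G} :
    ⁅x, y⁆ = 1 ↔ y ∈ centralizer {x} := by
  rw [commutatorElement_eq_one_iff_mul_comm, mem_centralizer_singleton_iff, eq_comm]

theorem commutator_le_of_forall_notMem {B N : Subgroup G} [N.Normal] (hB : B ≠ ⊤)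
    (h : ∀ x, x ∉ B → ∀ y, ⁅x, y⁆ ∈ N) : commutator G ≤ N := by
  rw [_root_.commutator_def, commutator_le]
  intro p _ q _
  by_cases hp : p ∈ B
  · obtain ⟨u, -, hu⟩ := SetLike.exists_of_lt hB.lt_top
    have hup : u⁻¹ * p ∉ B := by rwa [mul_mem_cancel_right hp, inv_mem_iff]
    rw [← mul_inv_cancel_left u p, commutatorElement_mul_left_eq_conj_mul]
    exact N.mul_mem (‹N.Normal›.conj_mem _ (h _ hup q) u) (h u hu q)
  · exact h p hp q

section IndexTwo

variable {x y : G}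

theorem commutatorElement_eq_of_notMem_centralizer (hx : (centralizer {x}).index = 2)
    (hy : y ∉ centralizer {x}) {w : G} (hw : w ∉ centralizer {x}) : ⁅x, w⁆ = ⁅x, y⁆ := by
  have hc : y⁻¹ * w ∈ centralizer {x} := by
    rw [mul_mem_iff_of_index_two hx, inv_mem_iff]
    exact iff_of_false hy hw
  rw [← mul_inv_cancel_left y w, commutatorElement_mul_right_eq_mul_conj,
    commutatorElement_eq_one_iff_mem_centralizer.mpr hc, mul_one, mul_inv_cancel_right]

theorem commute_commutatorElement_self (hx : (centralizer {x}).index = 2)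
    (hy : y ∉ centralizer {x}) : Commute x ⁅x, y⁆ := by
  have hxy : x * y ∉ centralizer {x} := by
    rwa [mul_mem_cancel_left (mem_centralizer_singleton_iff.mpr rfl)]
  have h := commutatorElement_eq_of_notMem_centralizer hx hy hxy
  rw [commutatorElement_mul_right_eq_mul_conj, commutatorElement_self, one_mul] at h
  exact mul_inv_eq_iff_eq_mul.mp h

theorem conj_commutatorElement_eq_inv (hx : (centralizer {x}).index = 2) (y : G) :
    y * ⁅x, y⁆ * y⁻¹ = ⁅x, y⁆⁻¹ := by
  have h := commutatorElement_eq_one_iff_mem_centralizer.mpr (mul_self_mem_of_index_two hx y)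
  rw [commutatorElement_mul_right_eq_mul_conj, mul_assoc, mul_assoc, ← mul_assoc y] at h
  exact eq_inv_of_mul_eq_one_right h

theorem commutatorElement_inv_eq_self (hx : (centralizer {x}).index = 2)
    (hy : (centralizer {y}).index = 2) : ⁅x, y⁆⁻¹ = ⁅x, y⁆ := by
  by_cases hxy : y ∈ centralizer {x}
  · rw [commutatorElement_eq_one_iff_mem_centralizer.mpr hxy, inv_one]
  have hyz := commute_commutatorElement_self hy (mem_centralizer_singleton_comm.not.mp hxy)
  rw [← commutatorElement_inv x y, Commute.inv_right_iff] at hyz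
  rw [← conj_commutatorElement_eq_inv hx y, hyz.eq, mul_inv_cancel_right]

theorem commutatorElement_mem_center (hx : (centralizer {x}).index = 2)
    (hy : (centralizer {y}).index = 2) (hxy : y ∉ centralizer {x}) : ⁅x, y⁆ ∈ center G := by
  have hC : ∀ g, g ∉ centralizer {x} → g ∈ centralizer {⁅x, y⁆} := fun g hg => by
    rw [mem_centralizer_singleton_iff, ← mul_inv_eq_iff_eq_mul,
      ← commutatorElement_eq_of_notMem_centralizer hx hxy hg, conj_commutatorElement_eq_inv hx,
      commutatorElement_eq_of_notMem_centralizer hx hxy hg, commutatorElement_inv_eq_self hx hy]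
  have htop := eq_top_of_forall_notMem (ne_top_of_index_eq_two hx) hC
  exact mem_center_iff.mpr fun g => mem_centralizer_singleton_iff.mp ((eq_top_iff' _).mp htop g)

theorem commutatorElement_eq_of_index_two_of_notMem_centralizer {x' y' : G}
    (hx : (centralizer {x}).index = 2) (hx' : (centralizer {x'}).index = 2)
    (hxx' : x' ∉ centralizer {x}) (hy : y ∉ centralizer {x}) (hy' : y' ∉ centralizer {x'}) :
    ⁅x, y⁆ = ⁅x', y'⁆ := by
  rw [commutatorElement_eq_of_notMem_centralizer hx hxx' hy,
    commutatorElement_eq_of_notMem_centralizer hx'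
      (mem_centralizer_singleton_comm.not.mp hxx') hy',
    ← commutatorElement_inv x' x, commutatorElement_inv_eq_self hx' hx]

end IndexTwo

theorem commutatorElement_eq_of_notMem {B : Subgroup G}
    (hcent : ∀ a : G, a ∉ B → (centralizer {a}).index = 2) {x x' y y' : G} (hx : x ∉ B)
    (hx' : x' ∉ B) (hy : y ∉ centralizer {x}) (hy' : y' ∉ centralizer {x'}) :
    ⁅x, y⁆ = ⁅x', y'⁆ := by
  by_cases hxx' : x' ∈ centralizer {x}
  · obtain ⟨c, hcB, hcx, hcx'⟩ := exists_notMem_and_notMem_and_notMem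
      (ne_top_of_index_eq_two (hcent x hx)) (ne_top_of_index_eq_two (hcent x' hx')) hx
      (mem_centralizer_singleton_iff.mpr rfl) (mem_centralizer_singleton_comm.mp hxx')
    have hxc := mem_centralizer_singleton_comm.not.mp hcx
    have hx'c := mem_centralizer_singleton_comm.not.mp hcx'
    calc ⁅x, y⁆ = ⁅c, x⁆ := commutatorElement_eq_of_index_two_of_notMem_centralizer
          (hcent x hx) (hcent c hcB) hcx hy hxc
      _ = ⁅x', y'⁆ := commutatorElement_eq_of_index_two_of_notMem_centralizer
          (hcent c hcB) (hcent x' hx') hx'c hxc hy'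
  · exact commutatorElement_eq_of_index_two_of_notMem_centralizer (hcent x hx)
      (hcent x' hx') hxx' hy hy'

theorem commutator_eq_zpowers {B : Subgroup G} (hB : B ≠ ⊤)
    (hcent : ∀ a : G, a ∉ B → (centralizer {a}).index = 2) {a g : G} (ha : a ∉ B) (hg : g ∉ B)
    (hga : g ∉ centralizer {a}) : commutator G = zpowers ⁅a, g⁆ := by
  have : (zpowers ⁅a, g⁆).Normal := normal_of_le_center <|
    zpowers_le.mpr (commutatorElement_mem_center (hcent a ha) (hcent g hg) hga)
  refine le_antisymm (commutator_le_of_forall_notMem hB fun x hx y => ?_) ?_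
  · by_cases hy : y ∈ centralizer {x}
    · rw [commutatorElement_eq_one_iff_mem_centralizer.mpr hy]
      exact one_mem _
    · rw [commutatorElement_eq_of_notMem hcent hx ha hy hga]
      exact mem_zpowers _
  · exact zpowers_le.mpr (commutator_mem_commutator (mem_top a) (mem_top g))

end

theorem commutator_card_two_general (A : Type*) [Group A]
    (B : Subgroup A) (hB : B < ⊤)
    (hcent : ∀ a : A, a ∉ B → (Subgroup.centralizer {a}).index = 2) :
    Nat.card (commutator A) = 2 := by
  obtain ⟨a, -, ha⟩ := SetLike.exists_of_lt hB
  obtain ⟨g, hgB, hga⟩ :=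
    Subgroup.exists_notMem_and_notMem hB.ne (Subgroup.ne_top_of_index_eq_two (hcent a ha))
  have hz_ne : ⁅a, g⁆ ≠ 1 := mt commutatorElement_eq_one_iff_mem_centralizer.mp hga
  have hz_sq : ⁅a, g⁆ ^ 2 = 1 := by
    rw [pow_two, ← inv_eq_iff_mul_eq_one, commutatorElement_inv_eq_self (hcent a ha) (hcent g hgB)]
  rw [commutator_eq_zpowers hB.ne hcent ha hgB hga, Nat.card_zpowers, orderOf_eq_prime hz_sq hz_ne]

/-- If `A` is a finite nonabelian group and `B < A` is a proper subgroup such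
that every `a ∈ A \ B` has centralizer of index 2 in `A`, then `|A'| = 2`. -/
theorem commutator_card_two (A : Type*) [Group A] [Finite A]
    (hnab : ∃ x y : A, x * y ≠ y * x)
    (B : Subgroup A) (hB : B < ⊤)
    (hcent : ∀ a : A, a ∉ B → (Subgroup.centralizer {a}).index = 2) :
    Nat.card (commutator A) = 2 :=
  commutator_card_two_general A B hB hcent
end

section
/- Let R be a group acting faithfully and irreducibly on an elementary abelian 2-group V such that every R-orbit on V \ {1} has size dividing 6. If R acts non-trivially then |V| = 4 and the image of R in Aut(V) ≅ GL_2(2) has order divisible by 3. -/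
/-!
Let `G` be the image of `R` in `Aut V`. The `G`-fixed points form an invariant subgroup, so by
irreducibility they are trivial. Since `|V|` is even, a Sylow 2-subgroup of `G` fixes some
`v ≠ 1`; the orbit of `v` then has odd size dividing 6 and different from 1, i.e. size 3, so
`3 ∣ |G|`. The product of the orbit `{a, b, c}` is `G`-fixed, hence `c = a * b`, and
`{1, a, b, a * b}` is a nonzero invariant subgroup, hence all of `V`.
-/

open MulAction Pointwise

theorem inv_eq_self_of_sq_eq_one {G : Type*} [Group G] {a : G} (h : a ^ 2 = 1) : a⁻¹ = a :=
  inv_eq_of_mul_eq_one_right (by rwa [← pow_two])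

section ExponentTwo

variable {V : Type*} [CommGroup V]

def kleinSubgroup (hV2 : ∀ v : V, v ^ 2 = 1) (a b : V) : Subgroup V where
  carrier := {1, a, b, a * b}
  one_mem' := by simp
  mul_mem' {x y} hx hy := by
    have hsq : ∀ v : V, v * v = 1 := fun v => by rw [← pow_two, hV2]
    simp only [Set.mem_insert_iff, Set.mem_singleton_iff] at hx hy ⊢
    rcases hx with rfl | rfl | rfl | rfl <;> rcases hy with rfl | rfl | rfl | rfl <;>
      simp [hsq, mul_left_comm, mul_comm]
  inv_mem' {x} hx := by rwa [inv_eq_self_of_sq_eq_one (hV2 x)]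

theorem card_kleinSubgroup (hV2 : ∀ v : V, v ^ 2 = 1) {a b : V} (ha : a ≠ 1) (hb : b ≠ 1)
    (hab : a ≠ b) : Nat.card (kleinSubgroup hV2 a b) = 4 := by
  have hab1 : a * b ≠ 1 := by
    rwa [Ne, mul_eq_one_iff_eq_inv, inv_eq_self_of_sq_eq_one (hV2 b)]
  rw [← SetLike.coe_sort_coe, Nat.card_coe_set_eq]
  show ({1, a, b, a * b} : Set V).ncard = 4
  rw [Set.ncard_insert_of_notMem (by simp [ha.symm, hb.symm, hab1.symm]),
    Set.ncard_insert_of_notMem (by simp [hab, hb]),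
    Set.ncard_pair (by simpa [eq_comm, mul_eq_right] using ha)]

end ExponentTwo

theorem MonoidHom.orbit_range {R M α : Type*} [Group R] [Group M] [MulAction M α] (φ : R →* M)
    (a : α) : orbit φ.range a = Set.range fun r => φ r • a := by
  ext b
  constructor
  · rintro ⟨⟨_, r, rfl⟩, rfl⟩
    exact ⟨r, rfl⟩
  · rintro ⟨r, rfl⟩
    exact ⟨⟨φ r, r, rfl⟩, rfl⟩

section Orbits

variable {G α : Type*} [Group G] [MulAction G α] [Finite α]

theorem ncard_orbit_eq_one_iff {a : α} : (orbit G a).ncard = 1 ↔ a ∈ fixedPoints G α := by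
  classical
  have := Fintype.ofFinite α
  rw [← Nat.card_coe_set_eq, Nat.card_eq_fintype_card, mem_fixedPoints_iff_card_orbit_eq_one]

variable [Finite G]

theorem exists_ne_not_dvd_ncard_orbit {p : ℕ} [Fact p.Prime] (hp : p ∣ Nat.card α) {a : α}
    (ha : a ∈ fixedPoints G α) : ∃ b ≠ a, ¬ p ∣ (orbit G b).ncard := by
  obtain ⟨P⟩ := Sylow.nonempty (p := p) (G := G)
  obtain ⟨b, hb, hab⟩ :=
    P.isPGroup'.exists_fixed_point_of_prime_dvd_card_of_fixed_point α hp fun g => ha g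
  refine ⟨b, hab.symm, fun hdvd => P.not_dvd_index ?_⟩
  rw [← index_stabilizer] at hdvd
  exact hdvd.trans (Subgroup.index_dvd_of_le fun g hg => hb ⟨g, hg⟩)

theorem exists_ne_ncard_orbit_eq_three {a : α} (hfix : fixedPoints G α = {a})
    (h2 : 2 ∣ Nat.card α) (horb : ∀ b ≠ a, (orbit G b).ncard ∣ 6) :
    ∃ b ≠ a, (orbit G b).ncard = 3 := by
  obtain ⟨b, hba, hodd⟩ :=
    exists_ne_not_dvd_ncard_orbit (G := G) h2 (hfix ▸ Set.mem_singleton a)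
  have hne : (orbit G b).ncard ≠ 1 := fun h =>
    hba (by simpa [hfix] using ncard_orbit_eq_one_iff.mp h)
  have h6 := horb b hba
  have := Nat.le_of_dvd (by norm_num) h6
  refine ⟨b, hba, ?_⟩
  interval_cases (orbit G b).ncard <;> omega

end Orbits

section Invariant

variable {G V : Type*} [Group G] [CommGroup V] [MulDistribMulAction G V]

theorem fixedPoints_eq_one_of_irreducible
    (hirr : ∀ W : Subgroup V, (∀ g : G, ∀ v ∈ W, g • v ∈ W) → W = ⊥ ∨ W = ⊤)
    (hnt : ∃ (g : G) (v : V), g • v ≠ v) : fixedPoints G V = {1} := by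
  rcases hirr (FixedPoints.subgroup G V) fun g v hv h => by rw [hv g, hv h] with h | h
  · ext v
    exact (FixedPoints.mem_subgroup G V v).symm.trans (h ▸ Subgroup.mem_bot)
  · obtain ⟨g, v, hv⟩ := hnt
    exact absurd ((FixedPoints.mem_subgroup G V v).mp (h ▸ Subgroup.mem_top v) g) hv

theorem prod_mem_fixedPoints_of_smul_eq {S : Finset V} (hS : ∀ g : G, g • (S : Set V) = S) :
    ∏ x ∈ S, x ∈ fixedPoints G V := by
  classical
  intro g
  have himage : S.image (g • ·) = S := Finset.coe_injective (by simpa using hS g)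
  rw [Finset.smul_prod']
  conv_rhs => rw [← himage]
  exact (Finset.prod_image (f := fun x => x) (MulAction.injective (β := V) g).injOn).symm

theorem exists_invariant_subgroup_card_four (hV2 : ∀ v : V, v ^ 2 = 1)
    (hfix : fixedPoints G V = {1}) {v : V} (hv1 : v ≠ 1) (hv : (orbit G v).ncard = 3) :
    ∃ W : Subgroup V, v ∈ W ∧ (∀ g : G, ∀ w ∈ W, g • w ∈ W) ∧ Nat.card W = 4 := by
  classical
  have h1 : (1 : V) ∉ orbit G v := by
    rintro ⟨g, hg⟩
    exact hv1 (by simpa using congr_arg (g⁻¹ • ·) hg)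
  obtain ⟨a, b, c, hab, hac, hbc, horbit⟩ := Set.ncard_eq_three.mp hv
  have hc : c = a * b := by
    have hprod := prod_mem_fixedPoints_of_smul_eq (G := G) (S := {a, b, c}) fun g => by
      push_cast
      rw [← horbit, smul_orbit]
    rw [hfix, Finset.prod_insert (by simp [hab, hac]), Finset.prod_pair hbc, ← mul_assoc] at hprod
    rw [eq_inv_of_mul_eq_one_right hprod, inv_eq_self_of_sq_eq_one (hV2 _)]
  have hW : (kleinSubgroup hV2 a b : Set V) = insert 1 (orbit G v) := by
    rw [horbit, hc]
    rfl
  have hmem : ∀ x ∈ ({a, b, c} : Set V), x ≠ 1 := fun x hx h => h1 (horbit ▸ h ▸ hx)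
  refine ⟨kleinSubgroup hV2 a b, ?_, fun g w hw => ?_, card_kleinSubgroup hV2 ?_ ?_ hab⟩
  · rw [← SetLike.mem_coe, hW]
    exact Set.mem_insert_of_mem _ (mem_orbit_self v)
  · rw [← SetLike.mem_coe, hW] at hw ⊢
    rcases hw with rfl | hw
    · simp
    · exact Set.mem_insert_of_mem _ (by rw [← smul_orbit g v]; exact Set.smul_mem_smul_set hw)
  · exact hmem a (by simp)
  · exact hmem b (by simp)

end Invariant

theorem step_B1_general (R V : Type*) [Group R] [CommGroup V] [Finite V]
    (hV2 : ∀ v : V, v ^ 2 = 1)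
    (φ : R →* MulAut V)
    (hirr : ∀ W : Subgroup V, (∀ r : R, ∀ v ∈ W, φ r v ∈ W) → W = ⊥ ∨ W = ⊤)
    (horb : ∀ v : V, v ≠ 1 → Nat.card {w : V // ∃ r : R, φ r v = w} ∣ 6)
    (hnontriv : φ ≠ 1) :
    Nat.card V = 4 ∧ 3 ∣ Nat.card φ.range := by
  have hirr' :
      ∀ W : Subgroup V, (∀ g : φ.range, ∀ v ∈ W, g • v ∈ W) → W = ⊥ ∨ W = ⊤ :=
    fun W hW => hirr W fun r => hW ⟨φ r, r, rfl⟩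
  have hnt : ∃ (g : φ.range) (v : V), g • v ≠ v := by
    by_contra! h
    exact hnontriv (MonoidHom.ext fun r => MulEquiv.ext fun v => h ⟨φ r, r, rfl⟩ v)
  have hfix := fixedPoints_eq_one_of_irreducible hirr' hnt
  have h2 : 2 ∣ Nat.card V := by
    obtain ⟨g, u, hu⟩ := hnt
    have hu1 : u ≠ 1 := by rintro rfl; exact hu (smul_one g)
    exact orderOf_eq_prime (hV2 u) hu1 ▸ orderOf_dvd_natCard u
  obtain ⟨v, hv1, h3⟩ := exists_ne_ncard_orbit_eq_three hfix h2 fun v hv => by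
    rw [← Nat.card_coe_set_eq, φ.orbit_range]
    exact horb v hv
  obtain ⟨W, hvW, hW, hW4⟩ := exists_invariant_subgroup_card_four hV2 hfix hv1 h3
  refine ⟨?_, h3 ▸ index_stabilizer φ.range v ▸ Subgroup.index_dvd_card _⟩
  rcases hirr' W hW with rfl | rfl
  · exact absurd hvW hv1
  · rwa [Subgroup.card_top] at hW4

/-- Step B1: Let `R` act faithfully and irreducibly on an elementary abelian
2-group `V` with every orbit on `V \ {1}` of size dividing 6. If the action is
non-trivial, then `|V| = 4` and the image of `R` in `Aut(V)` has order divisible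
by 3. -/
theorem step_B1 (R V : Type*) [Group R] [CommGroup V] [Finite V]
    (hV2 : ∀ v : V, v ^ 2 = 1)
    (φ : R →* MulAut V) (hfaith : Function.Injective φ)
    (hirr : ∀ W : Subgroup V, (∀ r : R, ∀ v ∈ W, φ r v ∈ W) → W = ⊥ ∨ W = ⊤)
    (horb : ∀ v : V, v ≠ 1 → Nat.card {w : V // ∃ r : R, φ r v = w} ∣ 6)
    (hnontriv : φ ≠ 1) :
    Nat.card V = 4 ∧ 3 ∣ Nat.card φ.range :=
  step_B1_general R V hV2 φ hirr horb hnontriv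
end

section
/- Let G be a finite group with a central subgroup Z such that G/Z ≅ A_4. Then G has no conjugacy class of size exactly 2. -/
/-!
The centralizer `C` of an element whose conjugacy class has size 2 has index 2, and it contains
the central kernel of `G → A₄`. A subgroup of index 2 contains every element some odd power of
which lies in it, so `C` contains a preimage of every 3-cycle. Since the 3-cycles generate `A₄`
and `C` contains the kernel, `C = G`, which has index 1.
-/

open Equiv Equiv.Perm

namespace Subgroup

variable {G N : Type*} [Group G] [Group N] {H : Subgroup G}

theorem index_centralizer_singleton (g : G) :
    (centralizer {g}).index = Nat.card {h : G // IsConj g h} :=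
  calc (centralizer {g}).index = (MulAction.stabilizer (ConjAct G) g).index := by
        rw [ConjAct.stabilizer_eq_centralizer]; rfl
    _ = (MulAction.orbit (ConjAct G) g).ncard := MulAction.index_stabilizer _ g
    _ = Nat.card {h : G // IsConj g h} := Nat.card_congr <|
        Equiv.subtypeEquivRight fun _ => ConjAct.mem_orbit_conjAct.trans isConj_comm

theorem mem_of_pow_mem_of_index_eq_two (hH : H.index = 2) {n : ℕ} (hn : Odd n) {y : G}
    (hy : y ^ n ∈ H) : y ∈ H := by
  obtain ⟨k, rfl⟩ := hn
  rw [pow_succ, mul_mem_iff_of_index_two hH, pow_mul] at hy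
  exact hy.mp (pow_mem (sq_mem_of_index_two hH y) k)

theorem mem_of_odd_orderOf_map (hH : H.index = 2) {f : G →* N} (hker : f.ker ≤ H) {y : G}
    (hy : Odd (orderOf (f y))) : y ∈ H :=
  mem_of_pow_mem_of_index_eq_two hH hy <| hker <| by
    rw [MonoidHom.mem_ker, map_pow, pow_orderOf_eq_one]

theorem eq_top_of_range_le_map {f : G →* N} (hker : f.ker ≤ H) (hrange : f.range ≤ H.map f) :
    H = ⊤ := by
  rw [← comap_map_eq_self hker, eq_top_iff, ← MonoidHom.comap_range_self f]
  exact comap_mono hrange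

theorem index_ne_two_of_range_eq_alternatingGroup {α : Type*} [Fintype α] [DecidableEq α]
    {f : G →* Perm α} (hker : f.ker ≤ H) (hrange : f.range = alternatingGroup α) :
    H.index ≠ 2 := by
  intro hH
  have htop : H = ⊤ := eq_top_of_range_le_map hker <| by
    rw [hrange, ← closure_three_cycles_eq_alternating, closure_le]
    intro σ hσ
    obtain ⟨y, rfl⟩ : σ ∈ f.range := hrange ▸ hσ.mem_alternatingGroup
    exact mem_map_of_mem f <| mem_of_odd_orderOf_map hH hker <| by
      rw [hσ.orderOf]
      decide
  simp [htop] at hH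

end Subgroup

theorem step_B6_general (G : Type*) [Group G]
    (φ : G →* Equiv.Perm (Fin 4))
    (hker : φ.ker ≤ Subgroup.center G)
    (hrange : φ.range = alternatingGroup (Fin 4)) :
    ∀ g : G, Nat.card {h : G // IsConj g h} ≠ 2 := by
  intro g
  rw [← Subgroup.index_centralizer_singleton]
  exact Subgroup.index_ne_two_of_range_eq_alternatingGroup
    (hker.trans (Subgroup.center_le_centralizer {g})) hrange

/-- Step B6: if `G` is a finite group with a central subgroup `Z` such that
`G/Z ≅ A₄` (phrased via a homomorphism `φ : G → S₄` with central kernel `Z` and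
image `A₄`), then `G` has no conjugacy class of size exactly 2. -/
theorem step_B6 (G : Type*) [Group G] [Finite G]
    (φ : G →* Equiv.Perm (Fin 4))
    (hker : φ.ker ≤ Subgroup.center G)
    (hrange : φ.range = alternatingGroup (Fin 4)) :
    ∀ g : G, Nat.card {h : G // IsConj g h} ≠ 2 :=
  step_B6_general G φ hker hrange
end
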